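/- arXiv:math/0412537 — 6 statements merged into one kernel-verified Lean document; each statement's English description precedes it below -/
import Mathlib

section
/- Let m be a positive integer and let F and G be distribution functions on ℝ each having finite absolute moment of order m. Then, in the quotient ring ℝ[D]/(D^{m+1}) of real polynomials in D modulo the ideal generated by D^{m+1}, the product of the m-th Laplace characters of F and of G equals the m-th Laplace character of F ⋆ G; that is, (∑_{k=0}^m ((−1)^k/k!) μ_{F,k} D^k)·(∑_{k=0}^m ((−1)^k/k!) μ_{G,k} D^k) = ∑_{k=0}^m ((−1)^k/k!) μ_{F⋆G,k} D^k in ℝ[D]/(D^{m+1}). -/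
open MeasureTheory Polynomial

noncomputable section

/-- The polynomial `∑_{k=0}^m ((-1)^k/k!) μ_k D^k` associated to a measure,
where `μ_k = ∫ x^k dμ` is the `k`-th moment. -/
def laplaceCharPoly (m : ℕ) (μ : Measure ℝ) : Polynomial ℝ :=
  ∑ k ∈ Finset.range (m + 1),
    Polynomial.C ((-1 : ℝ) ^ k / k.factorial * ∫ x, x ^ k ∂μ) * Polynomial.X ^ k

/-- The `m`-th Laplace character of a measure, as an element of the quotient ring
`ℝ[D]/(D^{m+1})`. -/
def laplaceChar (m : ℕ) (μ : Measure ℝ) :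
    Polynomial ℝ ⧸ Ideal.span {(Polynomial.X : Polynomial ℝ) ^ (m + 1)} :=
  Ideal.Quotient.mk _ (laplaceCharPoly m μ)

/-- Convolution of two measures on `ℝ`: the law of the sum of independent random
variables with the given laws. -/
def convMeasure (μ ν : Measure ℝ) : Measure ℝ :=
  Measure.map (fun p : ℝ × ℝ => p.1 + p.2) (μ.prod ν)

lemma integrable_pow_of {m : ℕ} (μ : Measure ℝ) [IsProbabilityMeasure μ]
    (hμ : Integrable (fun x => |x| ^ m) μ) {k : ℕ} (hk : k ≤ m) :
    Integrable (fun x : ℝ => x ^ k) μ := by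
  have hdom : Integrable (fun x : ℝ => 1 + |x| ^ m) μ := (integrable_const 1).add hμ
  refine hdom.mono (by fun_prop) (Filter.Eventually.of_forall fun x => ?_)
  rw [Real.norm_eq_abs, Real.norm_eq_abs, abs_pow]
  rcases le_total (|x|) 1 with h | h
  · have h1 : |x| ^ k ≤ 1 := pow_le_one₀ (abs_nonneg x) h
    have h2 : (0:ℝ) ≤ |x| ^ m := pow_nonneg (abs_nonneg x) m
    calc |x| ^ k ≤ 1 := h1
    _ ≤ 1 + |x| ^ m := le_add_of_nonneg_right h2
    _ ≤ |1 + |x| ^ m| := le_abs_self _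
  · calc |x| ^ k ≤ |x| ^ m := pow_le_pow_right₀ h hk
    _ ≤ 1 + |x| ^ m := le_add_of_nonneg_left zero_le_one
    _ ≤ |1 + |x| ^ m| := le_abs_self _

lemma moment_conv {m : ℕ} (μ ν : Measure ℝ) [IsProbabilityMeasure μ] [IsProbabilityMeasure ν]
    (hμ : ∀ i ≤ m, Integrable (fun x : ℝ => x ^ i) μ)
    (hν : ∀ i ≤ m, Integrable (fun x : ℝ => x ^ i) ν)
    {k : ℕ} (hk : k ≤ m) :
    ∫ z, z ^ k ∂(convMeasure μ ν)
      = ∑ i ∈ Finset.range (k + 1),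
          (k.choose i : ℝ) * ((∫ x, x ^ i ∂μ) * (∫ y, y ^ (k - i) ∂ν)) := by
  rw [convMeasure, integral_map (by fun_prop) (by fun_prop)]
  have hexp : ∀ p : ℝ × ℝ, (p.1 + p.2) ^ k
      = ∑ i ∈ Finset.range (k + 1), p.1 ^ i * p.2 ^ (k - i) * (k.choose i : ℝ) :=
    fun p => add_pow p.1 p.2 k
  simp only [hexp]
  rw [integral_finset_sum]
  · refine Finset.sum_congr rfl fun i hi => ?_
    rw [integral_mul_const,
      integral_prod_mul (f := fun x : ℝ => x ^ i) (g := fun y : ℝ => y ^ (k - i))]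
    ring
  · intro i hi
    exact ((hμ i (le_trans (Nat.lt_succ_iff.mp (Finset.mem_range.mp hi)) hk)).mul_prod
      (hν (k - i) (le_trans (Nat.sub_le k i) hk))).mul_const _

lemma coeff_laplaceCharPoly (m : ℕ) (μ : Measure ℝ) (d : ℕ) :
    (laplaceCharPoly m μ).coeff d
      = if d ≤ m then (-1 : ℝ) ^ d / d.factorial * ∫ x, x ^ d ∂μ else 0 := by
  rw [laplaceCharPoly, Polynomial.finset_sum_coeff]
  simp only [Polynomial.coeff_C_mul, Polynomial.coeff_X_pow, mul_ite, mul_one, mul_zero]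
  rw [Finset.sum_ite_eq (Finset.range (m + 1)) d]
  simp [Nat.lt_succ_iff]

/-- If `F` and `G` are distribution functions on `ℝ` (modeled by their
probability measures `μ`, `ν`) with finite absolute moment of order `m ≥ 1`, then in
`ℝ[D]/(D^{m+1})` the product of the `m`-th Laplace characters of `F` and `G` is the
`m`-th Laplace character of `F ⋆ G`. -/
theorem laplaceChar_mul_eq_laplaceChar_conv (m : ℕ) (hm : 0 < m)
    (μ ν : Measure ℝ) [IsProbabilityMeasure μ] [IsProbabilityMeasure ν]
    (hμ : Integrable (fun x => |x| ^ m) μ)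
    (hν : Integrable (fun x => |x| ^ m) ν) :
    laplaceChar m μ * laplaceChar m ν = laplaceChar m (convMeasure μ ν) := by
  have hμ' : ∀ i ≤ m, Integrable (fun x : ℝ => x ^ i) μ :=
    fun i hi => integrable_pow_of μ hμ hi
  have hν' : ∀ i ≤ m, Integrable (fun x : ℝ => x ^ i) ν :=
    fun i hi => integrable_pow_of ν hν hi
  unfold laplaceChar
  rw [← map_mul, Ideal.Quotient.eq, Ideal.mem_span_singleton, Polynomial.X_pow_dvd_iff]
  intro d hd
  have hdm : d ≤ m := Nat.lt_succ_iff.mp hd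
  rw [Polynomial.coeff_sub, sub_eq_zero, Polynomial.coeff_mul, coeff_laplaceCharPoly,
    if_pos hdm, moment_conv μ ν hμ' hν' hdm, Finset.Nat.sum_antidiagonal_eq_sum_range_succ_mk,
    Finset.mul_sum]
  refine Finset.sum_congr rfl fun i hi => ?_
  have hid : i ≤ d := Nat.lt_succ_iff.mp (Finset.mem_range.mp hi)
  rw [coeff_laplaceCharPoly, coeff_laplaceCharPoly, if_pos (le_trans hid hdm),
    if_pos (le_trans (Nat.sub_le d i) hdm)]
  have hC : (d.choose i : ℝ) = d.factorial / (i.factorial * (d - i).factorial) := by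
    rw [eq_div_iff (by positivity), ← mul_assoc]
    exact_mod_cast Nat.choose_mul_factorial_mul_factorial hid
  have h1 : (-1 : ℝ) ^ i * (-1 : ℝ) ^ (d - i) = (-1 : ℝ) ^ d := by
    rw [← pow_add, Nat.add_sub_cancel' hid]
  rw [hC]
  have hi0 : (i.factorial : ℝ) ≠ 0 := by positivity
  have hdi0 : ((d - i).factorial : ℝ) ≠ 0 := by positivity
  have hd0 : (d.factorial : ℝ) ≠ 0 := by positivity
  have key : (-1 : ℝ) ^ i / i.factorial * (∫ x, x ^ i ∂μ)
        * ((-1 : ℝ) ^ (d - i) / (d - i).factorial * ∫ y, y ^ (d - i) ∂ν)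
      = ((-1 : ℝ) ^ i * (-1 : ℝ) ^ (d - i))
        * ((∫ x, x ^ i ∂μ) * ∫ y, y ^ (d - i) ∂ν)
        / (i.factorial * (d - i).factorial) := by ring
  rw [key, h1]
  field_simp
end
end

section
/- Let m be a positive integer and let F be a distribution function on ℝ with finite absolute moment of order m. In the quotient ring ℝ[D]/(D^{m+1}), the m-th Laplace character L_{F,m} is invertible with inverse given by L_{F,m}^{−1} = ∑_{n=0}^m ( ∑_{p ∈ P(m,n)} (−1)^{n+p₁} · (p₁! / ∏_{k=1}^m ((Δp)_k)!) · ∏_{k=1}^m (μ_{F,k}/k!)^{(Δp)_k} ) D^n, where P(m,n) is the set of ordered partitions of n of length at most m, i.e. tuples p = (p₁ ≥ p₂ ≥ ⋯ ≥ p_ℓ > 0) with ℓ ≤ m and p₁ + ⋯ + p_ℓ = n, extended by p_i = 0 for i > ℓ, and Δp = (p₁ − p₂, p₂ − p₃, …, p_m − p_{m+1}). -/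
open MeasureTheory Polynomial

noncomputable section

/-- The set of ordered partitions of `n` of length at most `m`, encoded (0-indexed) as
nonincreasing functions `p : ℕ → ℕ` vanishing from index `m` on, with
`p 0 + ⋯ + p (m-1) = n`.  Here `p j` is the part `p_{j+1}` of the 1-indexed partition. -/
def OPart (m n : ℕ) : Set (ℕ → ℕ) :=
  {p | (∀ i, p (i + 1) ≤ p i) ∧ (∀ i, m ≤ i → p i = 0) ∧ ∑ i ∈ Finset.range m, p i = n}



private def Dset (m r : ℕ) : Finset (Fin m → ℕ) :=
  (Fintype.piFinset fun _ => Finset.range (r+1)).filter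
    (fun δ => ∑ k : Fin m, ((k : ℕ) + 1) * δ k = r)

private lemma mem_Dset {m r : ℕ} {δ : Fin m → ℕ} :
    δ ∈ Dset m r ↔ ∑ k : Fin m, ((k : ℕ) + 1) * δ k = r := by
  constructor
  · exact fun h => (Finset.mem_filter.1 h).2
  · intro h
    refine Finset.mem_filter.2 ⟨Fintype.mem_piFinset.2 fun k => ?_, h⟩
    rw [Finset.mem_range]
    have h1 : ((k:ℕ)+1) * δ k ≤ r := by
      rw [← h]
      exact Finset.single_le_sum (f := fun k : Fin m => ((k:ℕ)+1)*δ k)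
        (fun _ _ => Nat.zero_le _) (Finset.mem_univ k)
    have h2 : δ k ≤ ((k:ℕ)+1) * δ k := Nat.le_mul_of_pos_left _ (Nat.succ_pos _)
    omega

private def Hterm (m : ℕ) (a : ℕ → ℝ) (δ : Fin m → ℕ) : ℝ :=
  (-1 : ℝ) ^ (∑ k, δ k) * (((∑ k, δ k).factorial : ℝ) / ∏ k, ((δ k).factorial : ℝ)) *
    ∏ k : Fin m, a ((k : ℕ) + 1) ^ δ k

private def Gsum (m : ℕ) (a : ℕ → ℝ) (r : ℕ) : ℝ := ∑ δ ∈ Dset m r, Hterm m a δ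

private lemma Dset_zero (m : ℕ) : Dset m 0 = {fun _ => 0} := by
  ext δ
  rw [mem_Dset, Finset.mem_singleton]
  constructor
  · intro h
    funext k
    have := Finset.sum_eq_zero_iff.1 h k (Finset.mem_univ k)
    rcases Nat.mul_eq_zero.1 this with h' | h'
    · omega
    · exact h'
  · intro h; subst h; simp

private lemma Gsum_zero (m : ℕ) (a : ℕ → ℝ) : Gsum m a 0 = 1 := by
  rw [Gsum, Dset_zero, Finset.sum_singleton, Hterm]
  simp


private lemma hterm_dec (m : ℕ) (a : ℕ → ℝ) (δ : Fin m → ℕ) (j : Fin m) (hj : 0 < δ j) :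
    a ((j:ℕ)+1) * Hterm m a (Function.update δ j (δ j - 1)) =
      ((δ j : ℝ) / ((∑ k, δ k : ℕ) : ℝ)) * (- Hterm m a δ) := by
  classical
  have hjm : j ∈ Finset.univ := Finset.mem_univ j
  have upd_eq : ∀ k ∈ Finset.univ \ {j}, Function.update δ j (δ j - 1) k = δ k := by
    intro k hk
    exact Function.update_of_ne (by simpa using (Finset.mem_sdiff.1 hk).2) _ _
  have h1 : ∑ k, Function.update δ j (δ j - 1) k
      = (δ j - 1) + ∑ k ∈ Finset.univ \ {j}, δ k := by
    rw [Finset.sum_eq_add_sum_sdiff_singleton_of_mem hjm, Function.update_self]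
    exact congrArg _ (Finset.sum_congr rfl fun k hk => by rw [upd_eq k hk])
  have h2 : ∏ k, ((Function.update δ j (δ j - 1) k).factorial : ℝ)
      = ((δ j - 1).factorial : ℝ) * ∏ k ∈ Finset.univ \ {j}, ((δ k).factorial : ℝ) := by
    rw [Finset.prod_eq_mul_prod_sdiff_singleton_of_mem hjm, Function.update_self]
    exact congrArg _ (Finset.prod_congr rfl fun k hk => by rw [upd_eq k hk])
  have h3 : ∏ k : Fin m, a ((k:ℕ)+1) ^ (Function.update δ j (δ j - 1) k)
      = a ((j:ℕ)+1) ^ (δ j - 1) * ∏ k ∈ Finset.univ \ {j}, a ((k:ℕ)+1) ^ δ k := by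
    rw [Finset.prod_eq_mul_prod_sdiff_singleton_of_mem hjm, Function.update_self]
    exact congrArg _ (Finset.prod_congr rfl fun k hk => by rw [upd_eq k hk])
  have h4 : ∑ k, δ k = δ j + ∑ k ∈ Finset.univ \ {j}, δ k :=
    Finset.sum_eq_add_sum_sdiff_singleton_of_mem hjm _
  have h5 : ∏ k, ((δ k).factorial : ℝ)
      = ((δ j).factorial : ℝ) * ∏ k ∈ Finset.univ \ {j}, ((δ k).factorial : ℝ) :=
    Finset.prod_eq_mul_prod_sdiff_singleton_of_mem hjm _
  have h6 : ∏ k : Fin m, a ((k:ℕ)+1) ^ δ k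
      = a ((j:ℕ)+1) ^ (δ j) * ∏ k ∈ Finset.univ \ {j}, a ((k:ℕ)+1) ^ δ k :=
    Finset.prod_eq_mul_prod_sdiff_singleton_of_mem hjm _
  simp only [Hterm]
  rw [h1, h2, h3, h4, h5, h6]
  obtain ⟨u, hu⟩ : ∃ u, δ j = u + 1 := ⟨δ j - 1, by omega⟩
  rw [hu]
  set R := ∑ k ∈ Finset.univ \ {j}, δ k with hR
  set Rf := ∏ k ∈ Finset.univ \ {j}, ((δ k).factorial : ℝ) with hRf
  set Ra := ∏ k ∈ Finset.univ \ {j}, a ((k:ℕ)+1) ^ δ k with hRa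
  have hRf0 : Rf ≠ 0 := by
    rw [hRf]
    exact ne_of_gt (Finset.prod_pos fun k _ => by positivity)
  have e1 : u + 1 - 1 = u := by omega
  have e2 : u + 1 + R = (u + R) + 1 := by omega
  rw [e1, e2, Nat.factorial_succ (u + R), Nat.factorial_succ u, pow_succ, pow_succ]
  have hf1 : ((u + R).factorial : ℝ) ≠ 0 := Nat.cast_ne_zero.2 (Nat.factorial_ne_zero _)
  have hf2 : (u.factorial : ℝ) ≠ 0 := Nat.cast_ne_zero.2 (Nat.factorial_ne_zero _)
  have hS0 : ((u + R + 1 : ℕ) : ℝ) ≠ 0 := Nat.cast_ne_zero.2 (by omega)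
  push_cast
  field_simp


private lemma sum_dec (m : ℕ) (a : ℕ → ℝ) (δ : Fin m → ℕ) (hδ : 0 < ∑ k, δ k) :
    ∑ j ∈ Finset.univ.filter (fun j => 0 < δ j),
      a ((j:ℕ)+1) * Hterm m a (Function.update δ j (δ j - 1)) = - Hterm m a δ := by
  classical
  rw [Finset.sum_congr rfl
    (fun j hj => hterm_dec m a δ j (Finset.mem_filter.1 hj).2)]
  rw [← Finset.sum_mul, ← Finset.sum_div]
  rw [← Nat.cast_sum]
  rw [Finset.sum_filter_of_ne (fun x _ h => Nat.pos_of_ne_zero (by simpa using h))]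
  rw [div_self (Nat.cast_ne_zero.2 (by omega))]
  rw [one_mul]

private lemma upd_sum (m : ℕ) (δ : Fin m → ℕ) (j : Fin m) (b : ℕ) :
    ∑ k : Fin m, ((k:ℕ)+1) * Function.update δ j b k
      = ((j:ℕ)+1)*b + ∑ k ∈ Finset.univ \ {j}, ((k:ℕ)+1) * δ k := by
  classical
  rw [Finset.sum_eq_add_sum_sdiff_singleton_of_mem (Finset.mem_univ j)
    (fun k => ((k:ℕ)+1) * Function.update δ j b k), Function.update_self]
  congr 1
  exact Finset.sum_congr rfl fun k hk => by
    rw [Function.update_of_ne (by simpa using (Finset.mem_sdiff.1 hk).2)]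

private lemma conv (m : ℕ) (a : ℕ → ℝ) {n : ℕ} (h1 : 1 ≤ n) (hnm : n ≤ m) :
    ∑ i ∈ Finset.range n, a (i+1) * Gsum m a (n - (i+1)) = - Gsum m a n := by
  classical
  -- reindex range n by Fin m
  have hrange : Finset.range n
      = ((Finset.univ : Finset (Fin m)).filter (fun j : Fin m => (j:ℕ) < n)).image Fin.val := by
    ext i
    simp only [Finset.mem_range, Finset.mem_image, Finset.mem_filter, Finset.mem_univ,
      true_and]
    constructor
    · intro hi
      exact ⟨⟨i, lt_of_lt_of_le hi hnm⟩, hi, rfl⟩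
    · rintro ⟨j, hj, rfl⟩; exact hj
  rw [hrange, Finset.sum_image (fun x _ y _ h => Fin.val_injective h)]
  -- sigma form
  rw [show (fun j : Fin m => a ((j:ℕ)+1) * Gsum m a (n - ((j:ℕ)+1)))
      = fun j : Fin m => ∑ δ' ∈ Dset m (n - ((j:ℕ)+1)), a ((j:ℕ)+1) * Hterm m a δ' from
    funext fun j => by rw [Gsum, Finset.mul_sum]]
  rw [Finset.sum_sigma' ((Finset.univ : Finset (Fin m)).filter (fun j : Fin m => (j:ℕ) < n))
    (fun j => Dset m (n - ((j:ℕ)+1)))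
    (fun j δ' => a ((j:ℕ)+1) * Hterm m a δ')]
  have hRHS : - Gsum m a n
      = ∑ x ∈ (Dset m n).sigma (fun δ => Finset.univ.filter (fun j => 0 < δ j)),
          a ((x.2:ℕ)+1) * Hterm m a (Function.update x.1 x.2 (x.1 x.2 - 1)) := by
    rw [← Finset.sum_sigma' (Dset m n) (fun δ => Finset.univ.filter (fun j => 0 < δ j))
      (fun δ j => a ((j:ℕ)+1) * Hterm m a (Function.update δ j (δ j - 1)))]
    rw [Gsum, ← Finset.sum_neg_distrib]
    refine Finset.sum_congr rfl fun δ hδ => ?_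
    have hpos : 0 < ∑ k, δ k := by
      rw [mem_Dset] at hδ
      by_contra h
      push_neg at h
      have h0 : ∀ k, δ k = 0 := fun k =>
        Nat.eq_zero_of_le_zero (le_trans (Finset.single_le_sum
          (f := fun k : Fin m => δ k) (fun _ _ => Nat.zero_le _) (Finset.mem_univ k)) h)
      rw [Finset.sum_eq_zero (fun k _ => by rw [h0 k, Nat.mul_zero])] at hδ
      omega
    exact (sum_dec m a δ hpos).symm
  rw [hRHS]
  refine Finset.sum_nbij'
    (i := fun x => ⟨Function.update x.2 x.1 (x.2 x.1 + 1), x.1⟩)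
    (j := fun y => ⟨y.2, Function.update y.1 y.2 (y.1 y.2 - 1)⟩)
    ?_ ?_ ?_ ?_ ?_
  · rintro ⟨j, δ'⟩ hx
    rw [Finset.mem_sigma] at hx
    obtain ⟨hj, hδ'⟩ := hx
    rw [Finset.mem_filter] at hj
    rw [mem_Dset] at hδ'
    dsimp only at hj hδ' ⊢
    rw [Finset.mem_sigma]
    constructor
    · rw [mem_Dset, upd_sum]
      have hd : ∑ k : Fin m, ((k:ℕ)+1) * δ' k
          = ((j:ℕ)+1)*(δ' j) + ∑ k ∈ Finset.univ \ {j}, ((k:ℕ)+1) * δ' k :=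
        Finset.sum_eq_add_sum_sdiff_singleton_of_mem (Finset.mem_univ j) _
      have e : ((j:ℕ)+1)*(δ' j + 1) = ((j:ℕ)+1)*(δ' j) + ((j:ℕ)+1) := by ring
      have hj2 : (j:ℕ) < n := hj.2
      omega
    · simp [Function.update_self]
  · rintro ⟨δ, j⟩ hy
    dsimp only at hy ⊢
    rw [Finset.mem_sigma] at hy
    obtain ⟨hδ, hj⟩ := hy
    rw [mem_Dset] at hδ
    rw [Finset.mem_filter] at hj
    dsimp only at hδ hj ⊢
    have hjpos : 0 < δ j := hj.2
    have hd : ∑ k : Fin m, ((k:ℕ)+1) * δ k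
        = ((j:ℕ)+1)*(δ j) + ∑ k ∈ Finset.univ \ {j}, ((k:ℕ)+1) * δ k :=
      Finset.sum_eq_add_sum_sdiff_singleton_of_mem (Finset.mem_univ j) _
    obtain ⟨u, hu⟩ : ∃ u, δ j = u + 1 := ⟨δ j - 1, by omega⟩
    have e : ((j:ℕ)+1)*(u+1) = ((j:ℕ)+1)*u + ((j:ℕ)+1) := by ring
    rw [Finset.mem_sigma]
    constructor
    · rw [Finset.mem_filter]
      refine ⟨Finset.mem_univ _, ?_⟩
      dsimp only
      rw [hu] at hd
      omega
    · rw [mem_Dset, upd_sum]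
      dsimp only
      rw [hu, Nat.add_sub_cancel]
      rw [hu] at hd
      omega
  · rintro ⟨j, δ'⟩ _
    dsimp only
    simp [Function.update_idem, Function.update_self, Function.update_eq_self]
  · rintro ⟨δ, j⟩ hy
    dsimp only at hy ⊢
    rw [Finset.mem_sigma, Finset.mem_filter] at hy
    have : δ j - 1 + 1 = δ j := by dsimp only at hy; omega
    simp [Function.update_idem, Function.update_self, this, Function.update_eq_self]
  · rintro ⟨j, δ'⟩ _
    dsimp only
    simp [Function.update_idem, Function.update_self, Function.update_eq_self]


private def eemb (m : ℕ) (δ : Fin m → ℕ) (i : ℕ) : ℕ :=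
  ∑ j : Fin m, if i ≤ (j:ℕ) then δ j else 0

private lemma eemb_zero_of_le (m : ℕ) (δ : Fin m → ℕ) {i : ℕ} (hi : m ≤ i) :
    eemb m δ i = 0 :=
  Finset.sum_eq_zero fun j _ => if_neg (by have := j.isLt; omega)

private lemma eemb_succ (m : ℕ) (δ : Fin m → ℕ) {i : ℕ} (hi : i < m) :
    eemb m δ i = δ ⟨i, hi⟩ + eemb m δ (i+1) := by
  simp only [eemb]
  rw [show δ ⟨i, hi⟩ = ∑ j : Fin m, if j = ⟨i, hi⟩ then δ j else 0 by
    rw [Finset.sum_ite_eq' Finset.univ (⟨i,hi⟩ : Fin m) δ]; simp]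
  rw [← Finset.sum_add_distrib]
  refine Finset.sum_congr rfl fun j _ => ?_
  simp only [Fin.ext_iff]
  split_ifs <;> omega

private lemma eemb_antitone (m : ℕ) (δ : Fin m → ℕ) (i : ℕ) :
    eemb m δ (i+1) ≤ eemb m δ i :=
  Finset.sum_le_sum fun j _ => by split_ifs <;> omega

private lemma eemb_sub (m : ℕ) (δ : Fin m → ℕ) {i : ℕ} (hi : i < m) :
    eemb m δ i - eemb m δ (i+1) = δ ⟨i, hi⟩ := by
  rw [eemb_succ m δ hi]; omega

private lemma eemb_apply_zero (m : ℕ) (δ : Fin m → ℕ) :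
    eemb m δ 0 = ∑ j, δ j :=
  Finset.sum_congr rfl fun j _ => if_pos (Nat.zero_le _)

private lemma eemb_inj (m : ℕ) : Function.Injective (eemb m) := by
  intro δ γ h
  funext j
  have e1 : eemb m δ ↑j - eemb m δ (↑j+1) = δ j := by
    rw [eemb_sub m δ j.isLt]
  have e2 : eemb m γ ↑j - eemb m γ (↑j+1) = γ j := by
    rw [eemb_sub m γ j.isLt]
  rw [← e1, ← e2, h]

private lemma sum_eemb (m : ℕ) (δ : Fin m → ℕ) :
    ∑ i ∈ Finset.range m, eemb m δ i = ∑ j : Fin m, ((j:ℕ)+1) * δ j := by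
  simp only [eemb]
  rw [Finset.sum_comm]
  refine Finset.sum_congr rfl fun j _ => ?_
  rw [Finset.sum_ite, Finset.sum_const, Finset.sum_const_zero, add_zero, smul_eq_mul]
  congr 1
  rw [show (Finset.range m).filter (fun i => i ≤ (j:ℕ)) = Finset.range ((j:ℕ)+1) by
    ext i; simp only [Finset.mem_filter, Finset.mem_range]; have := j.isLt; omega]
  exact Finset.card_range _

private lemma eemb_delta (m : ℕ) {p : ℕ → ℕ} (hmono : ∀ i, p (i+1) ≤ p i)
    (hvan : ∀ i, m ≤ i → p i = 0) :
    eemb m (fun j => p ↑j - p (↑j+1)) = p := by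
  funext i
  by_cases hi : i < m
  · have key : ∀ d i, i + d = m → eemb m (fun j => p ↑j - p (↑j+1)) i = p i := by
      intro d
      induction d with
      | zero =>
        intro i h
        rw [eemb_zero_of_le m _ (by omega), hvan i (by omega)]
      | succ d ih =>
        intro i h
        have hi' : i < m := by omega
        rw [eemb_succ m _ hi', ih (i+1) (by omega)]
        have := hmono i
        dsimp only
        omega
    exact key (m - i) i (by omega)
  · rw [eemb_zero_of_le m _ (by omega), hvan i (by omega)]

private lemma opart_eq (m n : ℕ) :
    OPart m n = eemb m '' ↑(Dset m n) := by
  ext p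
  constructor
  · rintro ⟨hmono, hvan, hsum⟩
    refine ⟨fun j => p ↑j - p (↑j+1), ?_, eemb_delta m hmono hvan⟩
    rw [Finset.mem_coe, mem_Dset, ← sum_eemb m _, eemb_delta m hmono hvan]
    exact hsum
  · rintro ⟨δ, hδ, rfl⟩
    rw [Finset.mem_coe, mem_Dset] at hδ
    refine ⟨eemb_antitone m δ, fun i hi => eemb_zero_of_le m δ hi, ?_⟩
    rw [sum_eemb m δ, hδ]

private lemma finsum_opart (m n : ℕ) (c : ℕ → ℝ) :
    (∑ᶠ p ∈ OPart m n,
        (-1:ℝ)^(n + p 0) * (((p 0).factorial : ℝ) /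
          ∏ k ∈ Finset.range m, (((p k - p (k+1)).factorial : ℝ))) *
          ∏ k ∈ Finset.range m, (c (k+1)) ^ (p k - p (k+1)))
      = ∑ δ ∈ Dset m n,
        (-1:ℝ)^(n + ∑ k, δ k) *
          (((∑ k, δ k).factorial : ℝ) / ∏ k, ((δ k).factorial : ℝ)) *
          ∏ k : Fin m, (c ((k:ℕ)+1)) ^ (δ k) := by
  rw [opart_eq m n, finsum_mem_image ((eemb_inj m).injOn), finsum_mem_coe_finset]
  refine Finset.sum_congr rfl fun δ _ => ?_
  have hf : ∏ k ∈ Finset.range m, (((eemb m δ k - eemb m δ (k+1)).factorial : ℝ))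
      = ∏ k, ((δ k).factorial : ℝ) := by
    rw [← Fin.prod_univ_eq_prod_range
      (fun k => (((eemb m δ k - eemb m δ (k+1)).factorial : ℝ))) m]
    exact Finset.prod_congr rfl fun j _ => by
      rw [eemb_sub m δ j.isLt, Fin.eta]
  have hp : ∏ k ∈ Finset.range m, (c (k+1)) ^ (eemb m δ k - eemb m δ (k+1))
      = ∏ k : Fin m, (c ((k:ℕ)+1)) ^ (δ k) := by
    rw [← Fin.prod_univ_eq_prod_range
      (fun k => (c (k+1)) ^ (eemb m δ k - eemb m δ (k+1))) m]
    exact Finset.prod_congr rfl fun j _ => by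
      rw [eemb_sub m δ j.isLt, Fin.eta]
  rw [eemb_apply_zero, hf, hp]

private lemma dset_sum_eq_Gsum (m n : ℕ) (c : ℕ → ℝ) :
    (∑ δ ∈ Dset m n,
        (-1:ℝ)^(n + ∑ k, δ k) *
          (((∑ k, δ k).factorial : ℝ) / ∏ k, ((δ k).factorial : ℝ)) *
          ∏ k : Fin m, (c ((k:ℕ)+1)) ^ (δ k))
      = Gsum m (fun k => (-1:ℝ)^k * c k) n := by
  refine Finset.sum_congr rfl fun δ hδ => ?_
  rw [mem_Dset] at hδ
  simp only [Hterm]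
  have h6 : ∏ k : Fin m, ((-1:ℝ)^((k:ℕ)+1) * c ((k:ℕ)+1)) ^ δ k
      = (-1:ℝ)^n * ∏ k : Fin m, c ((k:ℕ)+1) ^ δ k := by
    simp only [mul_pow, ← pow_mul]
    rw [Finset.prod_mul_distrib, Finset.prod_pow_eq_pow_sum, hδ]
  rw [h6, pow_add]
  ring

private lemma coeff_sumCXpow (m : ℕ) (b : ℕ → ℝ) {i : ℕ} (hi : i ≤ m) :
    (∑ k ∈ Finset.range (m+1), Polynomial.C (b k) * Polynomial.X ^ k).coeff i = b i := by
  rw [Polynomial.finset_sum_coeff]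
  simp only [Polynomial.coeff_C_mul, Polynomial.coeff_X_pow, mul_ite, mul_one, mul_zero]
  rw [Finset.sum_ite_eq (Finset.range (m+1)) i b]
  rw [if_pos (Finset.mem_range.2 (by omega))]

/-- Inversion formula for the Laplace character: in `ℝ[D]/(D^{m+1})`,
`L_{F,m}` is invertible with inverse
`∑_{n=0}^m ( ∑_{p ∈ P(m,n)} (-1)^{n+p₁} (p₁ choose Δp) ∏_k (μ_k/k!)^{(Δp)_k} ) D^n`,
where `(Δp)_k = p_k - p_{k+1}` (1-indexed, `p_{m+1} = 0`) and
`(p₁ choose Δp) = p₁!/∏_k ((Δp)_k)!`. -/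
theorem laplaceChar_inverse_formula (m : ℕ) (hm : 0 < m)
    (μ : Measure ℝ) [IsProbabilityMeasure μ]
    (hμ : Integrable (fun x => |x| ^ m) μ) :
    laplaceChar m μ *
      Ideal.Quotient.mk (Ideal.span {(Polynomial.X : Polynomial ℝ) ^ (m + 1)})
        (∑ n ∈ Finset.range (m + 1),
          Polynomial.C
            (∑ᶠ p ∈ OPart m n,
              (-1 : ℝ) ^ (n + p 0) *
                (((p 0).factorial : ℝ) /
                  ∏ k ∈ Finset.range m, (((p k - p (k + 1)).factorial : ℝ))) *
                ∏ k ∈ Finset.range m,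
                  ((∫ x, x ^ (k + 1) ∂μ) / (k + 1).factorial) ^ (p k - p (k + 1)))
            * Polynomial.X ^ n)
      = 1 := by
  classical
  set c : ℕ → ℝ := fun k => (∫ x, x ^ k ∂μ) / (k.factorial : ℝ) with hc
  set a : ℕ → ℝ := fun k => (-1:ℝ)^k * c k with ha
  have ha0 : a 0 = 1 := by
    simp [ha, hc]
  have hB : ∀ n, (∑ᶠ p ∈ OPart m n,
        (-1 : ℝ) ^ (n + p 0) *
          (((p 0).factorial : ℝ) /
            ∏ k ∈ Finset.range m, (((p k - p (k + 1)).factorial : ℝ))) *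
          ∏ k ∈ Finset.range m,
            ((∫ x, x ^ (k + 1) ∂μ) / (k + 1).factorial) ^ (p k - p (k + 1)))
      = Gsum m a n :=
    fun n => (finsum_opart m n c).trans (dset_sum_eq_Gsum m n c)
  have hP : laplaceCharPoly m μ
      = ∑ k ∈ Finset.range (m+1), Polynomial.C (a k) * Polynomial.X ^ k := by
    simp only [laplaceCharPoly]
    refine Finset.sum_congr rfl fun k _ => ?_
    have hx : ((-1:ℝ)^k / k.factorial * ∫ x, x ^ k ∂μ) = a k := by
      simp only [ha, hc]; ring
    rw [hx]
  simp only [laplaceChar, hB, hP]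
  rw [← map_mul]
  rw [show (1 : Polynomial ℝ ⧸ Ideal.span {(Polynomial.X : Polynomial ℝ) ^ (m + 1)})
      = Ideal.Quotient.mk _ (1 : Polynomial ℝ) from (map_one _).symm]
  rw [Ideal.Quotient.mk_eq_mk_iff_sub_mem, Ideal.mem_span_singleton]
  rw [Polynomial.X_pow_dvd_iff]
  intro d hd
  have hdm : d ≤ m := by omega
  rw [Polynomial.coeff_sub, Polynomial.coeff_mul, Polynomial.coeff_one]
  rw [Finset.Nat.sum_antidiagonal_eq_sum_range_succ_mk]
  dsimp only
  have hstep : ∑ k ∈ Finset.range (d+1),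
      ((∑ j ∈ Finset.range (m+1), Polynomial.C (a j) * Polynomial.X ^ j).coeff k *
        (∑ j ∈ Finset.range (m+1), Polynomial.C (Gsum m a j) * Polynomial.X ^ j).coeff (d - k))
      = ∑ k ∈ Finset.range (d+1), a k * Gsum m a (d - k) := by
    refine Finset.sum_congr rfl fun k hk => ?_
    rw [Finset.mem_range] at hk
    rw [coeff_sumCXpow m a (by omega), coeff_sumCXpow m (Gsum m a) (by omega)]
  rw [hstep]
  rcases Nat.eq_zero_or_pos d with hd0 | hd1
  · subst hd0
    simp [ha0, Gsum_zero]
  · rw [Finset.sum_range_succ']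
    rw [conv m a hd1 hdm, ha0, Nat.sub_zero, one_mul]
    rw [if_neg (by omega)]
    ring
end
end

section
/- Let m be a nonnegative integer, r ∈ [0,1], t > 0 and u ∈ ℝ. Let h be a real function that is m times differentiable on the closed interval with endpoints t and t+u, and suppose h^{(m)}(t) ≠ 0. Then |h(t+u) − ∑_{j=0}^m (u^j/j!)·h^{(j)}(t)| ≤ (|u|^{m+r}/t^r)·(|h^{(m)}(t)|/m!)·Δ̄^r_{t,|u|/t}(h^{(m)}). -/
open MeasureTheory Filter Set
open scoped ENNReal

noncomputable section

/-- The operator `Δ^r_{t,x} g = sign(x) (g(t(1-x)) - g(t)) / (|x|^r g(t))`. -/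
def DeltaOp (r : ℝ) (g : ℝ → ℝ) (t x : ℝ) : ℝ :=
  Real.sign x * (g (t * (1 - x)) - g t) / (|x| ^ r * g t)

/-- `Δ̄^r_{τ,δ}(g) = sup_{t ≥ τ} sup_{0<|x|≤δ} |Δ^r_{t,x} g|`, valued in `[0,∞]`
(with the convention that an empty supremum is `0`). -/
def DeltaBar (r : ℝ) (g : ℝ → ℝ) (τ δ : ℝ) : ℝ≥0∞ :=
  ⨆ (t : ℝ) (_ : τ ≤ t) (x : ℝ) (_ : 0 < |x|) (_ : |x| ≤ δ),
    ENNReal.ofReal |DeltaOp r g t x|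

lemma telescope_aux (y : ℝ) (f : ℕ → ℝ) (n : ℕ) :
    ∑ j ∈ Finset.range (n + 1),
      ((j : ℝ) * y ^ (j - 1) * (-1) / j.factorial * f j + y ^ j / j.factorial * f (j + 1))
      = y ^ n / n.factorial * f (n + 1) := by
  induction n with
  | zero => simp
  | succ n ih =>
    rw [Finset.sum_range_succ, ih]
    have h1 : ((n:ℝ) + 1) ≠ 0 := by positivity
    have h2 : ((n.factorial : ℝ)) ≠ 0 := Nat.cast_ne_zero.2 n.factorial_pos.ne'
    simp only [Nat.add_sub_cancel, Nat.factorial_succ]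
    push_cast
    field_simp
    ring

lemma mvt_aux {φ φ' : ℝ → ℝ} {a b : ℝ} (hab : a ≤ b)
    (hφ : ∀ s ∈ Set.Icc a b, HasDerivAt φ (φ' s) s)
    (K : ℝ) (n : ℕ)
    (hbound : ∀ s ∈ Set.Icc a b, |φ' s| ≤ K * (s - a) ^ n)
    (h0 : φ a = 0) :
    |φ b| ≤ K * (b - a) ^ (n + 1) / (n + 1) := by
  have hB : ∀ x : ℝ, HasDerivAt (fun s => K * (s - a) ^ (n+1) / (n+1)) (K * (x - a) ^ n) x := by
    intro x
    have h1 : HasDerivAt (fun s : ℝ => (s - a) ^ (n+1)) ((↑(n+1) : ℝ) * (x - a) ^ n) x := by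
      simpa [Pi.pow_def] using ((hasDerivAt_id x).sub_const a).pow (n+1)
    have h2 := (h1.const_mul K).div_const ((n : ℝ) + 1)
    refine h2.congr_deriv ?_
    have h3 : ((n:ℝ) + 1) ≠ 0 := by positivity
    push_cast
    field_simp
  have key := image_norm_le_of_norm_deriv_right_le_deriv_boundary
    (f := φ) (f' := φ') (a := a) (b := b)
    (fun s hs => (hφ s hs).continuousAt.continuousWithinAt)
    (fun s hs => (hφ s (Set.Ico_subset_Icc_self hs)).hasDerivWithinAt)
    (B := fun s => K * (s - a) ^ (n+1) / (n+1)) (B' := fun s => K * (s - a) ^ n)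
    (by simp [h0]) hB
    (fun s hs => by rw [Real.norm_eq_abs]; exact hbound s (Set.Ico_subset_Icc_self hs))
  have := key (Set.right_mem_Icc.2 hab)
  rwa [Real.norm_eq_abs] at this

/-- Taylor-type bound: if `h` is `m` times differentiable on the closed
interval with endpoints `t` and `t+u`, `t > 0`, `r ∈ [0,1]` and `h^{(m)}(t) ≠ 0`, then
`|h(t+u) - ∑_{j≤m} (u^j/j!) h^{(j)}(t)| ≤ (|u|^{m+r}/t^r)(|h^{(m)}(t)|/m!) Δ̄^r_{t,|u|/t}(h^{(m)})`. -/
theorem taylor_deltaBar_bound (m : ℕ) (r : ℝ) (hr : r ∈ Set.Icc (0 : ℝ) 1)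
    (t u : ℝ) (ht : 0 < t) (h : ℝ → ℝ)
    (hdiff : ∀ x ∈ Set.uIcc t (t + u), ∀ j < m, DifferentiableAt ℝ (iteratedDeriv j h) x)
    (hne : iteratedDeriv m h t ≠ 0) :
    ENNReal.ofReal
        |h (t + u) - ∑ j ∈ Finset.range (m + 1), u ^ j / j.factorial * iteratedDeriv j h t|
      ≤ ENNReal.ofReal
          (|u| ^ ((m : ℝ) + r) / t ^ r * (|iteratedDeriv m h t| / m.factorial)) *
        DeltaBar r (iteratedDeriv m h) t (|u| / t) := by
  obtain ⟨hr0, hr1⟩ := hr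
  rcases eq_or_ne u 0 with hu | hu
  · have hsum : (∑ j ∈ Finset.range (m + 1), (0:ℝ) ^ j / j.factorial * iteratedDeriv j h t)
        = h t := by
      rw [Finset.sum_eq_single 0]
      · simp [iteratedDeriv_zero]
      · intro b _ hb; simp [zero_pow hb]
      · intro hmem; exact absurd (Finset.mem_range.2 (Nat.succ_pos m)) hmem
    simp [hu, hsum]
  · have habs : 0 < |u| := abs_pos.2 hu
    have h1 : 0 < |u| ^ ((m:ℝ) + r) := Real.rpow_pos_of_pos habs _
    have h2 : 0 < t ^ r := Real.rpow_pos_of_pos ht _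
    have h3 : 0 < |iteratedDeriv m h t| := abs_pos.2 hne
    have h4 : (0:ℝ) < m.factorial := Nat.cast_pos.2 m.factorial_pos
    have hC : 0 < |u| ^ ((m:ℝ) + r) / t ^ r * (|iteratedDeriv m h t| / m.factorial) :=
      mul_pos (div_pos h1 h2) (div_pos h3 h4)
    rcases eq_or_ne (DeltaBar r (iteratedDeriv m h) t (|u| / t)) ⊤ with htop | htop
    · rw [htop, ENNReal.mul_top (ENNReal.ofReal_pos.2 hC).ne']
      exact le_top
    · set D := (DeltaBar r (iteratedDeriv m h) t (|u| / t)).toReal with hDdef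
      have hD0 : 0 ≤ D := ENNReal.toReal_nonneg
      have hbar : DeltaBar r (iteratedDeriv m h) t (|u| / t) = ENNReal.ofReal D :=
        (ENNReal.ofReal_toReal htop).symm
      set M : ℝ := |u| ^ r / t ^ r * |iteratedDeriv m h t| * D with hMdef
      have hM0 : 0 ≤ M := by positivity
      have hwidth : ∀ s ∈ Set.uIcc t (t + u), |s - t| ≤ |u| := by
        intro s hs
        rw [Set.mem_uIcc] at hs
        rw [abs_le]
        rcases hs with ⟨ha, hb⟩ | ⟨ha, hb⟩ <;>
          constructor <;> nlinarith [neg_abs_le u, le_abs_self u]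
      have hkey : ∀ s ∈ Set.uIcc t (t + u),
          |iteratedDeriv m h s - iteratedDeriv m h t| ≤ M := by
        intro s hs
        rcases eq_or_ne s t with rfl | hst
        · simpa using hM0
        · obtain ⟨x, hxdef⟩ : ∃ x : ℝ, x = (t - s) / t := ⟨_, rfl⟩
          have hx0 : x ≠ 0 := by
            rw [hxdef]; exact div_ne_zero (sub_ne_zero.2 (Ne.symm hst)) ht.ne'
          have hxabs : |x| = |s - t| / t := by
            rw [hxdef, abs_div, abs_of_pos ht, abs_sub_comm]
          have hxpos : 0 < |x| := abs_pos.2 hx0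
          have hxle : |x| ≤ |u| / t := by
            rw [hxabs]
            exact (div_le_div_iff_of_pos_right ht).2 (hwidth s hs)
          have harg : t * (1 - x) = s := by
            rw [hxdef]; field_simp; ring
          have hle : ENNReal.ofReal |DeltaOp r (iteratedDeriv m h) t x|
              ≤ DeltaBar r (iteratedDeriv m h) t (|u| / t) :=
            le_iSup_of_le t (le_iSup_of_le le_rfl (le_iSup_of_le x
              (le_iSup_of_le hxpos (le_iSup_of_le hxle le_rfl))))
          have hDop : |DeltaOp r (iteratedDeriv m h) t x| ≤ D := by
            have := ENNReal.toReal_mono htop hle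
            rwa [ENNReal.toReal_ofReal (abs_nonneg _)] at this
          have hsign : |Real.sign x| = 1 := by
            rcases hx0.lt_or_gt with hx | hx
            · simp [Real.sign_of_neg hx]
            · simp [Real.sign_of_pos hx]
          have hxr : 0 < |x| ^ r := Real.rpow_pos_of_pos hxpos r
          have heq : |iteratedDeriv m h s - iteratedDeriv m h t|
              = |x| ^ r * |iteratedDeriv m h t| * |DeltaOp r (iteratedDeriv m h) t x| := by
            rw [DeltaOp, harg, abs_div, abs_mul, hsign, one_mul, abs_mul,
              abs_of_nonneg (Real.rpow_nonneg (abs_nonneg x) r)]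
            field_simp
          rw [heq]
          have hstep : |x| ^ r ≤ |u| ^ r / t ^ r := by
            calc |x| ^ r ≤ (|u| / t) ^ r := Real.rpow_le_rpow (abs_nonneg x) hxle hr0
              _ = |u| ^ r / t ^ r := Real.div_rpow (abs_nonneg u) ht.le r
          rw [hMdef]
          have := mul_le_mul hstep hDop (abs_nonneg _) (by positivity)
          calc |x| ^ r * |iteratedDeriv m h t| * |DeltaOp r (iteratedDeriv m h) t x|
              ≤ (|u| ^ r / t ^ r) * |iteratedDeriv m h t| * D := by
                apply mul_le_mul _ hDop (abs_nonneg _) (by positivity)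
                exact mul_le_mul_of_nonneg_right hstep (abs_nonneg _)
            _ = |u| ^ r / t ^ r * |iteratedDeriv m h t| * D := by ring
      rw [hbar, ← ENNReal.ofReal_mul hC.le]
      refine ENNReal.ofReal_le_ofReal ?_
      -- real inequality
      cases m with
      | zero =>
        have hk := hkey (t + u) Set.right_mem_uIcc
        simp only [iteratedDeriv_zero] at hk hMdef ⊢
        simp only [Finset.range_one, Finset.sum_singleton, pow_zero, Nat.factorial_zero,
          Nat.cast_one, Nat.cast_zero, zero_add, div_one, one_mul]
        calc |h (t + u) - h t| ≤ M := hk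
          _ = |u| ^ r / t ^ r * |h t| * D := hMdef
      | succ n =>
        -- Taylor machinery
        set c : ℝ := iteratedDeriv (n + 1) h t with hcdef
        set φ : ℝ → ℝ := fun s => h (t + u)
            - (∑ j ∈ Finset.range (n + 1), (t + u - s) ^ j / j.factorial * iteratedDeriv j h s)
            - c * (t + u - s) ^ (n + 1) / (n + 1).factorial with hφdef
        set φ' : ℝ → ℝ := fun s =>
            (t + u - s) ^ n / n.factorial * (c - iteratedDeriv (n + 1) h s) with hφ'def
        have hφ : ∀ s ∈ Set.uIcc t (t + u), HasDerivAt φ (φ' s) s := by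
          intro s hs
          have hgd : ∀ j, j < n + 1 →
              HasDerivAt (iteratedDeriv j h) (iteratedDeriv (j + 1) h s) s := by
            intro j hj
            have := (hdiff s hs j hj).hasDerivAt
            rwa [← iteratedDeriv_succ] at this
          have hc1 : HasDerivAt (fun s : ℝ => t + u - s) (-1) s := by
            simpa using (hasDerivAt_id s).const_sub (t + u)
          have hpow : ∀ j : ℕ, HasDerivAt (fun s : ℝ => (t + u - s) ^ j)
              ((j : ℝ) * (t + u - s) ^ (j - 1) * (-1)) s := fun j =>
            (hasDerivAt_pow j (t + u - s)).comp s hc1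
          have hsum : HasDerivAt
              (fun s => ∑ j ∈ Finset.range (n + 1),
                (t + u - s) ^ j / j.factorial * iteratedDeriv j h s)
              (∑ j ∈ Finset.range (n + 1),
                ((j : ℝ) * (t + u - s) ^ (j - 1) * (-1) / j.factorial * iteratedDeriv j h s
                  + (t + u - s) ^ j / j.factorial * iteratedDeriv (j + 1) h s)) s := by
            apply HasDerivAt.fun_sum
            intro j hj
            exact ((hpow j).div_const _).mul (hgd j (Finset.mem_range.1 hj))
          have hlast : HasDerivAt (fun s : ℝ => c * (t + u - s) ^ (n + 1) / (n + 1).factorial)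
              (c * ((↑(n + 1) : ℝ) * (t + u - s) ^ n * (-1)) / (n + 1).factorial) s := by
            have := ((hpow (n + 1)).const_mul c).div_const ((n + 1).factorial : ℝ)
            simpa using this
          have H := ((hasDerivAt_const s (h (t + u))).sub hsum).sub hlast
          have heq : φ' s = 0 - (∑ j ∈ Finset.range (n + 1),
                ((j : ℝ) * (t + u - s) ^ (j - 1) * (-1) / j.factorial * iteratedDeriv j h s
                  + (t + u - s) ^ j / j.factorial * iteratedDeriv (j + 1) h s))
              - c * ((↑(n + 1) : ℝ) * (t + u - s) ^ n * (-1)) / (n + 1).factorial := by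
            rw [telescope_aux (t + u - s) (fun j => iteratedDeriv j h s) n, hφ'def]
            have h2 : ((n.factorial : ℝ)) ≠ 0 := Nat.cast_ne_zero.2 n.factorial_pos.ne'
            simp only [Nat.factorial_succ]
            push_cast
            field_simp
            ring
          rw [heq]
          exact H
        have hφb : φ (t + u) = 0 := by
          have hsum0 : (∑ j ∈ Finset.range (n + 1),
              (0:ℝ) ^ j / (j.factorial : ℝ) * iteratedDeriv j h (t + u))
              = h (t + u) := by
            rw [Finset.sum_eq_single 0]
            · simp [iteratedDeriv_zero]
            · intro b _ hb; simp [zero_pow hb]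
            · intro hmem; exact absurd (Finset.mem_range.2 (Nat.succ_pos n)) hmem
          rw [hφdef]
          simp only [sub_self]
          rw [hsum0]
          simp
        have hφt : φ t = h (t + u) - ∑ j ∈ Finset.range (n + 1 + 1),
            u ^ j / j.factorial * iteratedDeriv j h t := by
          rw [hφdef, Finset.sum_range_succ]
          simp only [add_sub_cancel_left]
          ring
        set K : ℝ := M / n.factorial with hKdef
        have hφ'bound : ∀ s' ∈ Set.uIcc t (t + u), |φ' s'| ≤ |t + u - s'| ^ n * K := by
          intro s' hs'
          have hk : |c - iteratedDeriv (n + 1) h s'| ≤ M := by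
            rw [hcdef, abs_sub_comm]; exact hkey s' hs'
          rw [hφ'def]
          simp only []
          rw [abs_mul, abs_div, abs_pow, Nat.abs_cast]
          calc |t + u - s'| ^ n / n.factorial * |c - iteratedDeriv (n + 1) h s'|
              ≤ |t + u - s'| ^ n / n.factorial * M := by
                apply mul_le_mul_of_nonneg_left hk (by positivity)
            _ = |t + u - s'| ^ n * K := by rw [hKdef]; ring
        have hfinal : |φ t| ≤ K * |u| ^ (n + 1) / (n + 1) := by
          rcases hu.lt_or_gt with hun | hup
          · -- u < 0 : interval [t+u, t]
            have hI : Set.uIcc t (t + u) = Set.Icc (t + u) t :=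
              Set.uIcc_of_ge (by linarith)
            have := mvt_aux (a := t + u) (b := t) (by linarith)
              (fun s hs => hφ s (by rw [hI]; exact hs)) K n
              (fun s hs => by
                have hb := hφ'bound s (by rw [hI]; exact hs)
                have : |t + u - s| = s - (t + u) := by
                  rw [abs_sub_comm, abs_of_nonneg (by linarith [hs.1])]
                rw [this] at hb
                calc |φ' s| ≤ (s - (t + u)) ^ n * K := hb
                  _ = K * (s - (t + u)) ^ n := by ring)
              hφb
            calc |φ t| ≤ K * (t - (t + u)) ^ (n + 1) / (n + 1) := this
              _ = K * |u| ^ (n + 1) / (n + 1) := by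
                rw [abs_of_neg hun]; ring_nf
          · -- u > 0 : interval [t, t+u], reflect
            have hI : Set.uIcc t (t + u) = Set.Icc t (t + u) :=
              Set.uIcc_of_le (by linarith)
            set ψ : ℝ → ℝ := fun s => φ (t + (t + u) - s) with hψdef
            have hψd : ∀ s ∈ Set.Icc t (t + u),
                HasDerivAt ψ (-φ' (t + (t + u) - s)) s := by
              intro s hs
              have hy : t + (t + u) - s ∈ Set.uIcc t (t + u) := by
                rw [hI]; exact ⟨by linarith [hs.2], by linarith [hs.1]⟩
              have hc1 : HasDerivAt (fun s : ℝ => t + (t + u) - s) (-1) s := by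
                simpa using (hasDerivAt_id s).const_sub (t + (t + u))
              have := (hφ _ hy).comp s hc1
              refine this.congr_deriv ?_
              ring
            have := mvt_aux (a := t) (b := t + u) (by linarith) hψd K n
              (fun s hs => by
                have hy : t + (t + u) - s ∈ Set.uIcc t (t + u) := by
                  rw [hI]; exact ⟨by linarith [hs.2], by linarith [hs.1]⟩
                have hb := hφ'bound _ hy
                have he : |t + u - (t + (t + u) - s)| = s - t := by
                  rw [show t + u - (t + (t + u) - s) = s - t by ring,
                    abs_of_nonneg (by linarith [hs.1])]
                rw [he] at hb
                calc |-φ' (t + (t + u) - s)| = |φ' (t + (t + u) - s)| := abs_neg _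
                  _ ≤ (s - t) ^ n * K := hb
                  _ = K * (s - t) ^ n := by ring)
              (by rw [hψdef]; simp only []; rw [show t + (t + u) - t = t + u by ring]; exact hφb)
            have hψb : ψ (t + u) = φ t := by
              rw [hψdef]; simp only []; rw [show t + (t + u) - (t + u) = t by ring]
            calc |φ t| = |ψ (t + u)| := by rw [hψb]
              _ ≤ K * (t + u - t) ^ (n + 1) / (n + 1) := this
              _ = K * |u| ^ (n + 1) / (n + 1) := by
                rw [add_sub_cancel_left, abs_of_pos hup]
        -- conclude
        rw [← hφt]
        have hpow_split : |u| ^ ((↑(n + 1) : ℝ) + r) = |u| ^ (n + 1) * |u| ^ r := by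
          rw [Real.rpow_add habs, Real.rpow_natCast]
        calc |φ t| ≤ K * |u| ^ (n + 1) / (n + 1) := hfinal
          _ = |u| ^ ((↑(n + 1) : ℝ) + r) / t ^ r
              * (|iteratedDeriv (n + 1) h t| / (n + 1).factorial) * D := by
            rw [hKdef, hMdef, hpow_split, Nat.factorial_succ]
            have h2 : ((n.factorial : ℝ)) ≠ 0 := Nat.cast_ne_zero.2 n.factorial_pos.ne'
            have h5 : ((n:ℝ) + 1) ≠ 0 := by positivity
            push_cast
            field_simp
            ring
end
end

section
/- Let g, h : [0,∞) → ℝ be nonincreasing right-continuous functions with g(x) ≤ h(x) for all x ≥ 0 and lim_{t→∞} g(t) = lim_{t→∞} h(t) = 0, and let μ_g, μ_h be the Borel measures on (0,∞) determined by μ_g((a,b]) = g(a) − g(b) and μ_h((a,b]) = h(a) − h(b) for 0 ≤ a ≤ b. Let f : [0,∞) → [0,∞) be nondecreasing and right-continuous. Then ∫_{(0,∞)} f dμ_g ≤ ∫_{(0,∞)} f dμ_h; equivalently, −∫ f dg ≤ −∫ f dh as Lebesgue–Stieltjes integrals. -/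
open MeasureTheory Filter Set
open scoped ENNReal Topology

noncomputable section

private lemma aux_Ioi (g : ℝ → ℝ)
    (hg_lim : Tendsto g atTop (nhds 0))
    (μg : Measure ℝ)
    (hμg : ∀ a b : ℝ, 0 ≤ a → a ≤ b → μg (Set.Ioc a b) = ENNReal.ofReal (g a - g b))
    (a : ℝ) (ha : 0 ≤ a) : μg (Set.Ioi a) = ENNReal.ofReal (g a) := by
  have hmono : Monotone (fun n : ℕ => Set.Ioc a (a + n)) := by
    intro m n hmn
    exact Set.Ioc_subset_Ioc le_rfl (by exact_mod_cast add_le_add_right (Nat.cast_le.mpr hmn) a)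
  have hunion : ⋃ n : ℕ, Set.Ioc a (a + n) = Set.Ioi a := by
    ext x
    simp only [Set.mem_iUnion, Set.mem_Ioc, Set.mem_Ioi]
    constructor
    · rintro ⟨n, h1, _⟩; exact h1
    · intro hx
      obtain ⟨n, hn⟩ := exists_nat_ge (x - a)
      exact ⟨n, hx, by linarith⟩
  have h1 : Tendsto (fun n : ℕ => μg (Set.Ioc a (a + n))) atTop (𝓝 (μg (Set.Ioi a))) := by
    rw [← hunion]
    exact tendsto_measure_iUnion_atTop hmono
  have h2 : Tendsto (fun n : ℕ => μg (Set.Ioc a (a + n))) atTop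
      (𝓝 (ENNReal.ofReal (g a))) := by
    have hgan : Tendsto (fun n : ℕ => g (a + n)) atTop (𝓝 0) :=
      hg_lim.comp (tendsto_atTop_add_const_left _ a tendsto_natCast_atTop_atTop)
    have hsub : Tendsto (fun n : ℕ => g a - g (a + n)) atTop (𝓝 (g a)) := by
      simpa using tendsto_const_nhds.sub hgan
    have := (ENNReal.continuous_ofReal.tendsto (g a)).comp hsub
    refine this.congr fun n => ?_
    simp only [Function.comp]
    rw [hμg a (a + n) ha (le_add_of_nonneg_right (Nat.cast_nonneg n))]
  exact tendsto_nhds_unique h1 h2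

/-- Let `g, h : [0,∞) → ℝ` be nonincreasing right-continuous functions
with `g ≤ h`, both tending to `0` at `∞`, and let `μg`, `μh` be the Borel measures on
`(0,∞)` with `μg((a,b]) = g(a) - g(b)` and `μh((a,b]) = h(a) - h(b)`.  If
`f : [0,∞) → [0,∞)` is nondecreasing and right-continuous, then
`∫ f dμg ≤ ∫ f dμh` (equivalently, `-∫ f dg ≤ -∫ f dh`). -/
theorem stieltjes_comparison
    (g h : ℝ → ℝ)
    (hg_anti : ∀ x y : ℝ, 0 ≤ x → x ≤ y → g y ≤ g x)
    (hh_anti : ∀ x y : ℝ, 0 ≤ x → x ≤ y → h y ≤ h x)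
    (hg_rc : ∀ x : ℝ, 0 ≤ x → ContinuousWithinAt g (Set.Ici x) x)
    (hh_rc : ∀ x : ℝ, 0 ≤ x → ContinuousWithinAt h (Set.Ici x) x)
    (hgh : ∀ x : ℝ, 0 ≤ x → g x ≤ h x)
    (hg_lim : Tendsto g atTop (nhds 0)) (hh_lim : Tendsto h atTop (nhds 0))
    (μg μh : Measure ℝ)
    (hμg_null : μg (Set.Iic 0) = 0) (hμh_null : μh (Set.Iic 0) = 0)
    (hμg : ∀ a b : ℝ, 0 ≤ a → a ≤ b → μg (Set.Ioc a b) = ENNReal.ofReal (g a - g b))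
    (hμh : ∀ a b : ℝ, 0 ≤ a → a ≤ b → μh (Set.Ioc a b) = ENNReal.ofReal (h a - h b))
    (f : ℝ → ℝ)
    (hf_nonneg : ∀ x : ℝ, 0 ≤ x → 0 ≤ f x)
    (hf_mono : ∀ x y : ℝ, 0 ≤ x → x ≤ y → f x ≤ f y)
    (hf_rc : ∀ x : ℝ, 0 ≤ x → ContinuousWithinAt f (Set.Ici x) x) :
    ∫⁻ x in Set.Ioi (0 : ℝ), ENNReal.ofReal (f x) ∂μg ≤
      ∫⁻ x in Set.Ioi (0 : ℝ), ENNReal.ofReal (f x) ∂μh := by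
  set F : ℝ → ℝ := fun x => f (max x 0) with hF_def
  have hF_mono : Monotone F := by
    intro x y hxy
    exact hf_mono _ _ (le_max_right x 0) (max_le_max hxy le_rfl)
  have hF_meas : Measurable F := hF_mono.measurable
  have hF_nonneg : ∀ x, 0 ≤ F x := fun x => hf_nonneg _ (le_max_right x 0)
  -- key comparison on up-sets
  have key : ∀ t : ℝ, μg ({a : ℝ | t < F a} ∩ Set.Ioi 0) ≤
      μh ({a : ℝ | t < F a} ∩ Set.Ioi 0) := by
    intro t
    set T : Set ℝ := {a : ℝ | t < F a} ∩ Set.Ioi 0 with hT_def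
    have hTup : ∀ x ∈ T, ∀ y, x ≤ y → y ∈ T := by
      rintro x ⟨hx1, hx2⟩ y hxy
      exact ⟨lt_of_lt_of_le hx1 (hF_mono hxy), lt_of_lt_of_le hx2 hxy⟩
    rcases Set.eq_empty_or_nonempty T with hT | hT
    · simp [hT]
    have hbdd : BddBelow T := ⟨0, fun x hx => le_of_lt hx.2⟩
    set a : ℝ := sInf T with ha_def
    have ha0 : 0 ≤ a := le_csInf hT fun x hx => le_of_lt hx.2
    have hIoi : Set.Ioi a ⊆ T := by
      intro x hx
      obtain ⟨y, hyT, hyx⟩ := exists_lt_of_csInf_lt hT hx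
      exact hTup y hyT x (le_of_lt hyx)
    have hIci : T ⊆ Set.Ici a := fun x hx => csInf_le hbdd hx
    by_cases haT : a ∈ T
    · -- T = Ici a, a > 0
      have ha_pos : 0 < a := haT.2
      have hTeq : T = Set.Ici a := by
        apply Set.Subset.antisymm hIci
        intro x hx
        rcases eq_or_lt_of_le (Set.mem_Ici.mp hx) with rfl | hlt
        · exact haT
        · exact hIoi hlt
      rw [hTeq]
      -- approximate Ici a from outside by Ioi (b n)
      set b : ℕ → ℝ := fun n => a - a / (n + 1) with hb_def
      have hb_nonneg : ∀ n, 0 ≤ b n := by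
        intro n
        have h1 : a / (n + 1 : ℝ) ≤ a / 1 := by
          apply div_le_div_of_nonneg_left ha_pos.le zero_lt_one
          exact le_add_of_nonneg_left (Nat.cast_nonneg n)
        simp only [hb_def]
        rw [div_one] at h1
        linarith
      have hb_lt : ∀ n, b n < a := by
        intro n
        have : 0 < a / (n + 1 : ℝ) := by positivity
        simp only [hb_def]; linarith
      have hb_mono : Monotone b := by
        intro m n hmn
        have : a / (n + 1 : ℝ) ≤ a / (m + 1 : ℝ) := by
          apply div_le_div_of_nonneg_left ha_pos.le (by positivity)
          have : (m : ℝ) ≤ n := Nat.cast_le.mpr hmn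
          linarith
        simp only [hb_def]; linarith
      have hanti : Antitone (fun n : ℕ => Set.Ioi (b n)) := fun m n hmn =>
        Set.Ioi_subset_Ioi (hb_mono hmn)
      have hInter : ⋂ n : ℕ, Set.Ioi (b n) = Set.Ici a := by
        ext x
        simp only [Set.mem_iInter, Set.mem_Ioi, Set.mem_Ici]
        constructor
        · intro hx
          by_contra hxa
          push_neg at hxa
          obtain ⟨n, hn⟩ := exists_nat_gt (a / (a - x))
          have hax : 0 < a - x := by linarith
          have h1 : a / (a - x) < (n : ℝ) + 1 := by
            have : (n : ℝ) ≤ n + 1 := by linarith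
            linarith
          have h2 : a / ((n : ℝ) + 1) < a - x := by
            rw [div_lt_iff₀ (by positivity)] at h1 ⊢
            · linarith [h1]
          have := hx n
          simp only [hb_def] at this
          linarith
        · intro hx n
          exact lt_of_lt_of_le (hb_lt n) hx
      have htend : Tendsto (fun n : ℕ => μh (Set.Ioi (b n))) atTop (𝓝 (μh (Set.Ici a))) := by
        rw [← hInter]
        exact tendsto_measure_iInter_atTop
          (fun n => (measurableSet_Ioi).nullMeasurableSet) hanti
          ⟨0, by rw [aux_Ioi h hh_lim μh hμh (b 0) (hb_nonneg 0)]; exact ENNReal.ofReal_ne_top⟩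
      refine ge_of_tendsto htend (Eventually.of_forall fun n => ?_)
      calc μg (Set.Ici a) ≤ μg (Set.Ioi (b n)) :=
            measure_mono fun x hx => lt_of_lt_of_le (hb_lt n) hx
        _ = ENNReal.ofReal (g (b n)) := aux_Ioi g hg_lim μg hμg (b n) (hb_nonneg n)
        _ ≤ ENNReal.ofReal (h (b n)) := ENNReal.ofReal_le_ofReal (hgh _ (hb_nonneg n))
        _ = μh (Set.Ioi (b n)) := (aux_Ioi h hh_lim μh hμh (b n) (hb_nonneg n)).symm
    · -- T = Ioi a
      have hTeq : T = Set.Ioi a := by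
        apply Set.Subset.antisymm _ hIoi
        intro x hx
        exact lt_of_le_of_ne (Set.mem_Ici.mp (hIci hx)) (by rintro rfl; exact haT hx)
      rw [hTeq, aux_Ioi g hg_lim μg hμg a ha0, aux_Ioi h hh_lim μh hμh a ha0]
      exact ENNReal.ofReal_le_ofReal (hgh a ha0)
  -- replace f by F on the integrals
  have hcongr : ∀ μ : Measure ℝ,
      ∫⁻ x in Set.Ioi (0 : ℝ), ENNReal.ofReal (f x) ∂μ =
      ∫⁻ x in Set.Ioi (0 : ℝ), ENNReal.ofReal (F x) ∂μ := by
    intro μ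
    apply setLIntegral_congr_fun measurableSet_Ioi
    intro x hx
    simp only [hF_def, max_eq_left (le_of_lt (Set.mem_Ioi.mp hx))]
  rw [hcongr μg, hcongr μh]
  rw [lintegral_eq_lintegral_meas_lt (μg.restrict (Set.Ioi 0))
    (Eventually.of_forall hF_nonneg) hF_meas.aemeasurable]
  rw [lintegral_eq_lintegral_meas_lt (μh.restrict (Set.Ioi 0))
    (Eventually.of_forall hF_nonneg) hF_meas.aemeasurable]
  apply lintegral_mono
  intro t
  have hSmeas : MeasurableSet {a : ℝ | t < F a} := measurableSet_lt measurable_const hF_meas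
  simp only [Measure.restrict_apply hSmeas]
  exact key t
end
end

section
/- Let m be a positive integer, r ∈ [0,1), and η ∈ (0,1). Let K be a continuous distribution function supported on [0,∞) with finite m-th moment, and let h : (0,∞) → ℝ be m times differentiable with h^{(m)} nowhere vanishing on (0,∞). Then for every t > 0: | ∫_{[0,ηt]} h(t−x) dK(x) − ∑_{j=0}^m ((−1)^j/j!)·μ_{K,j}·h^{(j)}(t) | ≤ ∑_{j=0}^m (|h^{(j)}(t)|/j!)·∫_{(ηt,∞)} x^j dK(x) + (|h^{(m)}(t)|/(t^r·m!))·∫_{[0,ηt]} Δ̄^r_{t,x/t}(h^{(m)})·x^{m+r} dK(x), where μ_{K,j} = ∫ x^j dK(x). -/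
open MeasureTheory Filter Set
open scoped ENNReal

noncomputable section

/-- Distribution function of a measure on `ℝ`. -/
def distFun (μ : Measure ℝ) (t : ℝ) : ℝ := (μ (Set.Iic t)).toReal

lemma iterDerivWithin_comp_sub (h : ℝ → ℝ) (m : ℕ)
    (hdiff : ∀ x : ℝ, 0 < x → ∀ j < m, DifferentiableAt ℝ (iteratedDeriv j h) x)
    (t b : ℝ) (hb : 0 < b) (hbt : b < t) :
    ∀ j, j ≤ m → ∀ y ∈ Set.Icc (0:ℝ) b,
      iteratedDerivWithin j (fun s => h (t - s)) (Set.Icc 0 b) y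
        = (-1 : ℝ) ^ j * iteratedDeriv j h (t - y) := by
  intro j
  induction j with
  | zero => intro _ y _; simp
  | succ j ih =>
    intro hj y hy
    have hjm : j < m := lt_of_lt_of_le (Nat.lt_succ_self j) hj
    have hud : UniqueDiffWithinAt ℝ (Set.Icc (0:ℝ) b) y := (uniqueDiffOn_Icc hb) y hy
    rw [iteratedDerivWithin_succ]
    have hcongr : derivWithin (iteratedDerivWithin j (fun s => h (t - s)) (Set.Icc 0 b))
        (Set.Icc (0:ℝ) b) y
        = derivWithin (fun z => (-1:ℝ) ^ j * iteratedDeriv j h (t - z)) (Set.Icc (0:ℝ) b) y :=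
      derivWithin_congr (fun z hz => ih (le_of_lt (Nat.lt_of_succ_le hj)) z hz)
        (ih (le_of_lt (Nat.lt_of_succ_le hj)) y hy)
    rw [hcongr]
    have hpos : 0 < t - y := by
      have h1 := hy.1; have h2 := hy.2; linarith
    have hinner : DifferentiableAt ℝ (fun z : ℝ => iteratedDeriv j h (t - z)) y :=
      (hdiff (t - y) hpos j hjm).comp y ((differentiableAt_const t).sub differentiableAt_id)
    have hd : DifferentiableAt ℝ (fun z => (-1:ℝ) ^ j * iteratedDeriv j h (t - z)) y :=
      hinner.const_mul _
    rw [hd.derivWithin hud, deriv_const_mul _ hinner, deriv_comp_const_sub,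
      ← iteratedDeriv_succ]
    ring

lemma taylor_step (h : ℝ → ℝ) (m : ℕ) (hm : 0 < m)
    (hdiff : ∀ x : ℝ, 0 < x → ∀ j < m, DifferentiableAt ℝ (iteratedDeriv j h) x)
    (t x : ℝ) (ht : 0 < t) (hx : 0 < x) (hxt : x < t) :
    ∃ ξ ∈ Set.Ioo (0:ℝ) x,
      h (t - x) - ∑ j ∈ Finset.range (m+1),
          (-1:ℝ) ^ j / (j.factorial : ℝ) * iteratedDeriv j h t * x ^ j
        = (-1:ℝ) ^ m * (x ^ m / (m.factorial : ℝ)) *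
            (iteratedDeriv m h (t - ξ) - iteratedDeriv m h t) := by
  obtain ⟨n, rfl⟩ := Nat.exists_eq_succ_of_ne_zero hm.ne'
  have key := iterDerivWithin_comp_sub h (n+1) hdiff t x hx hxt
  have hdAt : ∀ k, k < n + 1 → ∀ z ∈ Set.Icc (0:ℝ) x,
      DifferentiableAt ℝ (fun z : ℝ => (-1:ℝ) ^ k * iteratedDeriv k h (t - z)) z := by
    intro k hk z hz
    have hpos : 0 < t - z := by
      have h1 := hz.1; have h2 := hz.2; linarith
    exact ((hdiff (t - z) hpos k hk).comp z
      ((differentiableAt_const t).sub differentiableAt_id)).const_mul _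
  have hcf : ContDiffOn ℝ n (fun s => h (t - s)) (Set.Icc 0 x) := by
    apply contDiffOn_of_differentiableOn_deriv
    intro k hk
    have hk' : k ≤ n := by exact_mod_cast hk
    refine DifferentiableOn.congr (f := fun z => (-1:ℝ) ^ k * iteratedDeriv k h (t - z))
      ?_ (fun z hz => key k (hk'.trans (Nat.le_succ n)) z hz)
    exact fun z hz => (hdAt k (Nat.lt_succ_of_le hk') z hz).differentiableWithinAt
  have hf' : DifferentiableOn ℝ
      (iteratedDerivWithin n (fun s => h (t - s)) (Set.Icc 0 x)) (Set.Ioo 0 x) := by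
    refine DifferentiableOn.congr (f := fun z => (-1:ℝ) ^ n * iteratedDeriv n h (t - z))
      ?_ (fun z hz => key n (Nat.le_succ n) z (Set.Ioo_subset_Icc_self hz))
    exact fun z hz => (hdAt n (Nat.lt_succ_self n) z
      (Set.Ioo_subset_Icc_self hz)).differentiableWithinAt
  rw [← Set.uIcc_of_le hx.le] at hcf
  rw [← Set.uIcc_of_le hx.le, ← Set.uIoo_of_le hx.le] at hf'
  obtain ⟨ξ, hξ, heq⟩ := taylor_mean_remainder_lagrange hx.ne hcf hf'
  rw [Set.uIoo_of_le hx.le] at hξ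
  rw [Set.uIcc_of_le hx.le] at heq
  refine ⟨ξ, hξ, ?_⟩
  rw [taylor_within_apply] at heq
  have hsum : ∑ k ∈ Finset.range (n+1),
      (((k.factorial : ℝ))⁻¹ * (x - 0) ^ k) •
        iteratedDerivWithin k (fun s => h (t - s)) (Set.Icc 0 x) 0
      = ∑ j ∈ Finset.range (n+1),
        (-1:ℝ) ^ j / (j.factorial : ℝ) * iteratedDeriv j h t * x ^ j := by
    refine Finset.sum_congr rfl fun k hk => ?_
    have hk1 : k ≤ n + 1 := (Nat.lt_succ_iff.mp (Finset.mem_range.mp hk)).trans (Nat.le_succ n)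
    rw [key k hk1 0 (Set.mem_Icc.mpr ⟨le_rfl, hx.le⟩)]
    simp only [sub_zero, smul_eq_mul]
    ring
  have hlast := key (n+1) le_rfl ξ (Set.Ioo_subset_Icc_self hξ)
  rw [hsum, hlast, sub_zero] at heq
  rw [Finset.sum_range_succ]
  simp only [Nat.succ_eq_add_one]
  linear_combination heq

lemma pointwise_bound (m : ℕ) (hm : 0 < m) (r : ℝ) (hr0 : 0 ≤ r)
    (η : ℝ) (hη0 : 0 < η) (hη1 : η < 1) (h : ℝ → ℝ)
    (hdiff : ∀ x : ℝ, 0 < x → ∀ j < m, DifferentiableAt ℝ (iteratedDeriv j h) x)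
    (hne : ∀ x : ℝ, 0 < x → iteratedDeriv m h x ≠ 0)
    (t : ℝ) (ht : 0 < t) (x : ℝ) (hx : x ∈ Set.Icc (0:ℝ) (η * t)) :
    ENNReal.ofReal |h (t - x) - ∑ j ∈ Finset.range (m+1),
        (-1:ℝ) ^ j / (j.factorial : ℝ) * iteratedDeriv j h t * x ^ j|
      ≤ ENNReal.ofReal (|iteratedDeriv m h t| / (t ^ r * (m.factorial : ℝ))) *
          (DeltaBar r (iteratedDeriv m h) t (x / t) *
            ENNReal.ofReal (x ^ ((m : ℝ) + r))) := by
  rcases eq_or_lt_of_le hx.1 with h0 | hxpos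
  · have hzero : h (t - (0:ℝ)) - ∑ j ∈ Finset.range (m+1),
        (-1:ℝ) ^ j / (j.factorial : ℝ) * iteratedDeriv j h t * (0:ℝ) ^ j = 0 := by
      rw [Finset.sum_eq_single 0]
      · simp [iteratedDeriv_zero]
      · intro b _ hb; simp [zero_pow hb]
      · intro habs; exact absurd (Finset.mem_range.mpr (Nat.succ_pos m)) habs
    rw [← h0, hzero]
    simp
  · have hηtt : η * t < t := by nlinarith
    have hxt : x < t := lt_of_le_of_lt hx.2 hηtt
    obtain ⟨ξ, hξ, heq⟩ := taylor_step h m hm hdiff t x ht hxpos hxt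
    set g := iteratedDeriv m h with hg
    have hgt : g t ≠ 0 := hne t ht
    set u := ξ / t with hu
    have hu0 : 0 < u := div_pos hξ.1 ht
    have hut : u ≤ x / t := by
      rw [hu]; gcongr; exact hξ.2.le
    have htu : t * (1 - u) = t - ξ := by
      rw [hu, mul_sub, mul_one, mul_div_assoc', mul_div_cancel_left₀ _ ht.ne']
    have hne' : |u| ^ r * g t ≠ 0 :=
      mul_ne_zero (Real.rpow_pos_of_pos (abs_pos.mpr hu0.ne') r).ne' hgt
    have hDop : g (t - ξ) - g t = DeltaOp r g t u * (|u| ^ r * g t) := by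
      rw [DeltaOp, Real.sign_of_pos hu0, htu, one_mul, div_mul_cancel₀ _ hne']
    set d := |DeltaOp r g t u| with hd
    have h2 : |g (t - ξ) - g t| = d * (u ^ r * |g t|) := by
      rw [hDop, abs_mul, abs_mul, abs_of_nonneg (Real.rpow_nonneg (abs_nonneg u) r),
        abs_of_pos hu0]
    have habs : |h (t - x) - ∑ j ∈ Finset.range (m+1),
        (-1:ℝ) ^ j / (j.factorial : ℝ) * iteratedDeriv j h t * x ^ j|
        = (x ^ m / (m.factorial : ℝ) * (u ^ r * |g t|)) * d := by
      rw [heq, abs_mul, abs_mul, abs_pow, abs_neg, abs_one, one_pow, one_mul, h2,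
        abs_of_nonneg (by positivity : (0:ℝ) ≤ x ^ m / (m.factorial : ℝ))]
      ring
    have hab : x ^ m / (m.factorial : ℝ) * (u ^ r * |g t|)
        ≤ |g t| / (t ^ r * (m.factorial : ℝ)) * x ^ ((m:ℝ) + r) := by
      rw [Real.rpow_add hxpos, Real.rpow_natCast]
      have h1 : u ^ r ≤ x ^ r / t ^ r := by
        rw [← Real.div_rpow hxpos.le ht.le]
        exact Real.rpow_le_rpow hu0.le hut hr0
      calc x ^ m / (m.factorial : ℝ) * (u ^ r * |g t|)
          ≤ x ^ m / (m.factorial : ℝ) * ((x ^ r / t ^ r) * |g t|) := by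
            gcongr
        _ = |g t| / (t ^ r * (m.factorial : ℝ)) * (x ^ m * x ^ r) := by ring
    have hDbar : ENNReal.ofReal d ≤ DeltaBar r g t (x / t) := by
      rw [DeltaBar]
      refine le_iSup_of_le t ?_
      refine le_iSup_of_le le_rfl ?_
      refine le_iSup_of_le u ?_
      refine le_iSup_of_le (abs_pos.mpr hu0.ne') ?_
      exact le_iSup_of_le (by rw [abs_of_pos hu0]; exact hut) le_rfl
    rw [habs, ENNReal.ofReal_mul (by positivity)]
    calc ENNReal.ofReal (x ^ m / (m.factorial : ℝ) * (u ^ r * |g t|)) * ENNReal.ofReal d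
        ≤ ENNReal.ofReal (|g t| / (t ^ r * (m.factorial : ℝ)) * x ^ ((m:ℝ) + r)) *
            DeltaBar r g t (x / t) :=
          mul_le_mul' (ENNReal.ofReal_le_ofReal hab) hDbar
      _ = ENNReal.ofReal (|g t| / (t ^ r * (m.factorial : ℝ))) *
            (DeltaBar r g t (x / t) * ENNReal.ofReal (x ^ ((m:ℝ) + r))) := by
          rw [ENNReal.ofReal_mul (by positivity)]
          ring

/-- fundamental estimate.  Let `m ≥ 1`, `r ∈ [0,1)`, `η ∈ (0,1)`, `K`
(law `ρ`) a continuous distribution function on `[0,∞)` with finite `m`-th moment, and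
`h` `m` times differentiable on `(0,∞)` with nonvanishing `m`-th derivative there.
Then for `t > 0`,
`|T_{K,η}h(t) - L_{K,m}h(t)| ≤ ∑_{j≤m} (|h^{(j)}(t)|/j!) ∫_{ηt}^∞ x^j dK
  + (|h^{(m)}(t)|/(t^r m!)) ∫_0^{ηt} Δ̄^r_{t,x/t}(h^{(m)}) x^{m+r} dK`. -/
theorem fundamental_estimate (m : ℕ) (hm : 0 < m) (r : ℝ) (hr0 : 0 ≤ r) (hr1 : r < 1)
    (η : ℝ) (hη0 : 0 < η) (hη1 : η < 1)
    (ρ : Measure ℝ) [IsProbabilityMeasure ρ]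
    (hρsupp : ρ (Set.Iio 0) = 0) (hρcont : Continuous (distFun ρ))
    (hρmom : Integrable (fun x : ℝ => x ^ m) ρ)
    (h : ℝ → ℝ)
    (hdiff : ∀ x : ℝ, 0 < x → ∀ j < m, DifferentiableAt ℝ (iteratedDeriv j h) x)
    (hne : ∀ x : ℝ, 0 < x → iteratedDeriv m h x ≠ 0)
    (t : ℝ) (ht : 0 < t) :
    ENNReal.ofReal
        |(∫ x in Set.Icc (0 : ℝ) (η * t), h (t - x) ∂ρ) -
          ∑ j ∈ Finset.range (m + 1),
            (-1 : ℝ) ^ j / j.factorial * (∫ x, x ^ j ∂ρ) * iteratedDeriv j h t|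
      ≤ ENNReal.ofReal
          (∑ j ∈ Finset.range (m + 1),
            |iteratedDeriv j h t| / j.factorial * ∫ x in Set.Ioi (η * t), x ^ j ∂ρ) +
        ENNReal.ofReal (|iteratedDeriv m h t| / (t ^ r * m.factorial)) *
          ∫⁻ x in Set.Icc (0 : ℝ) (η * t),
            DeltaBar r (iteratedDeriv m h) t (x / t) * ENNReal.ofReal (x ^ ((m : ℝ) + r)) ∂ρ := by
  have hηt : 0 < η * t := mul_pos hη0 ht
  -- integrability of moments
  have hintj : ∀ j, j ≤ m → Integrable (fun x : ℝ => x ^ j) ρ := by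
    intro j hj
    have hb : Integrable (fun x : ℝ => 1 + |x ^ m|) ρ := (integrable_const 1).add hρmom.abs
    refine hb.mono' (continuous_pow j).aestronglyMeasurable
      (Filter.Eventually.of_forall fun x => ?_)
    rw [Real.norm_eq_abs, abs_pow]
    rw [abs_pow]
    rcases le_total |x| 1 with hx1 | hx1
    · have h1 : |x| ^ j ≤ 1 := pow_le_one₀ (abs_nonneg x) hx1
      have h2 : (0:ℝ) ≤ |x| ^ m := pow_nonneg (abs_nonneg x) m
      linarith
    · have h1 : |x| ^ j ≤ |x| ^ m := pow_le_pow_right₀ hx1 hj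
      linarith
  have hJ : ∀ j : ℕ, 0 ≤ ∫ x in Set.Ioi (η * t), x ^ j ∂ρ := fun j =>
    setIntegral_nonneg measurableSet_Ioi fun x hx =>
      pow_nonneg (le_of_lt (lt_trans hηt hx)) j
  -- split of full moment integral
  have hae : ((Set.Icc (0:ℝ) (η * t))ᶜ : Set ℝ) =ᵐ[ρ] Set.Ioi (η * t) := by
    rw [MeasureTheory.ae_eq_set]
    constructor
    · refine measure_mono_null (fun z hz => ?_) hρsupp
      rcases hz with ⟨hz1, hz2⟩
      simp only [Set.mem_compl_iff, Set.mem_Icc, not_and_or, not_le] at hz1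
      simp only [Set.mem_Ioi, not_lt] at hz2
      rcases hz1 with hz1 | hz1
      · exact hz1
      · exact absurd hz2 (not_le.mpr hz1)
    · refine measure_mono_null (fun z hz => ?_) (measure_empty (μ := ρ))
      rcases hz with ⟨hz1, hz2⟩
      simp only [Set.mem_compl_iff, not_not, Set.mem_Icc] at hz2
      exact absurd hz2.2 (not_le.mpr hz1)
  have hsplit : ∀ j, j ≤ m → (∫ x, x ^ j ∂ρ)
      = (∫ x in Set.Icc (0:ℝ) (η * t), x ^ j ∂ρ) + ∫ x in Set.Ioi (η * t), x ^ j ∂ρ := by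
    intro j hj
    rw [← integral_add_compl measurableSet_Icc (hintj j hj)]
    congr 1
    exact setIntegral_congr_set hae
  -- integrability of h (t - ·) on the compact set
  have hconth : ContinuousOn (fun x : ℝ => h (t - x)) (Set.Icc (0:ℝ) (η * t)) := by
    intro x hx
    have hpos : 0 < t - x := by
      have h1 := hx.1; have h2 := hx.2; nlinarith
    have hda : DifferentiableAt ℝ h (t - x) := by
      simpa [iteratedDeriv_zero] using hdiff (t - x) hpos 0 hm
    exact (hda.continuousAt.comp
      ((continuous_const.sub continuous_id).continuousAt)).continuousWithinAt
  have hinth : IntegrableOn (fun x : ℝ => h (t - x)) (Set.Icc (0:ℝ) (η * t)) ρ :=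
    hconth.integrableOn_compact isCompact_Icc
  have hintP : ∀ j ∈ Finset.range (m + 1),
      Integrable (fun x : ℝ => (-1:ℝ) ^ j / (j.factorial : ℝ) * iteratedDeriv j h t * x ^ j)
        (ρ.restrict (Set.Icc (0:ℝ) (η * t))) := fun j hj =>
    ((hintj j (Nat.lt_succ_iff.mp (Finset.mem_range.mp hj))).restrict).const_mul _
  have hRint : ∫ x in Set.Icc (0:ℝ) (η * t),
        (h (t - x) - ∑ j ∈ Finset.range (m + 1),
          (-1:ℝ) ^ j / (j.factorial : ℝ) * iteratedDeriv j h t * x ^ j) ∂ρ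
      = (∫ x in Set.Icc (0:ℝ) (η * t), h (t - x) ∂ρ)
        - ∑ j ∈ Finset.range (m + 1), (-1:ℝ) ^ j / (j.factorial : ℝ) * iteratedDeriv j h t *
            (∫ x in Set.Icc (0:ℝ) (η * t), x ^ j ∂ρ) := by
    rw [integral_sub hinth (integrable_finset_sum _ hintP)]
    congr 1
    rw [integral_finset_sum _ hintP]
    exact Finset.sum_congr rfl fun j hj => integral_const_mul _ _
  -- main decomposition
  set RI : ℝ := ∫ x in Set.Icc (0: ℝ) (η * t),
      (h (t - x) - ∑ j ∈ Finset.range (m + 1),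
        (-1:ℝ) ^ j / (j.factorial : ℝ) * iteratedDeriv j h t * x ^ j) ∂ρ with hRI
  have hA : (∫ x in Set.Icc (0:ℝ) (η * t), h (t - x) ∂ρ) -
        ∑ j ∈ Finset.range (m + 1),
          (-1:ℝ) ^ j / (j.factorial : ℝ) * (∫ x, x ^ j ∂ρ) * iteratedDeriv j h t
      = RI - ∑ j ∈ Finset.range (m + 1),
          (-1:ℝ) ^ j / (j.factorial : ℝ) * (∫ x in Set.Ioi (η * t), x ^ j ∂ρ) *
            iteratedDeriv j h t := by
    rw [hRint]
    have e1 : ∑ j ∈ Finset.range (m + 1),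
        (-1:ℝ) ^ j / (j.factorial : ℝ) * (∫ x, x ^ j ∂ρ) * iteratedDeriv j h t
        = (∑ j ∈ Finset.range (m + 1),
            (-1:ℝ) ^ j / (j.factorial : ℝ) * iteratedDeriv j h t *
              (∫ x in Set.Icc (0:ℝ) (η * t), x ^ j ∂ρ))
          + ∑ j ∈ Finset.range (m + 1),
            (-1:ℝ) ^ j / (j.factorial : ℝ) * (∫ x in Set.Ioi (η * t), x ^ j ∂ρ) *
              iteratedDeriv j h t := by
      rw [← Finset.sum_add_distrib]
      refine Finset.sum_congr rfl fun j hj => ?_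
      rw [hsplit j (Nat.lt_succ_iff.mp (Finset.mem_range.mp hj))]
      ring
    rw [e1]
    ring
  rw [hA]
  -- triangle inequality
  have hsum_abs : |∑ j ∈ Finset.range (m + 1),
      (-1:ℝ) ^ j / (j.factorial : ℝ) * (∫ x in Set.Ioi (η * t), x ^ j ∂ρ) *
        iteratedDeriv j h t|
      ≤ ∑ j ∈ Finset.range (m + 1),
        |iteratedDeriv j h t| / (j.factorial : ℝ) * ∫ x in Set.Ioi (η * t), x ^ j ∂ρ := by
    refine (Finset.abs_sum_le_sum_abs _ _).trans ?_
    refine Finset.sum_le_sum fun j hj => le_of_eq ?_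
    rw [abs_mul, abs_mul, abs_div, abs_pow, abs_neg, abs_one, one_pow, abs_of_nonneg (hJ j),
      Nat.abs_cast]
    ring
  have htri : |RI - ∑ j ∈ Finset.range (m + 1),
      (-1:ℝ) ^ j / (j.factorial : ℝ) * (∫ x in Set.Ioi (η * t), x ^ j ∂ρ) *
        iteratedDeriv j h t|
      ≤ (∑ j ∈ Finset.range (m + 1),
          |iteratedDeriv j h t| / (j.factorial : ℝ) * ∫ x in Set.Ioi (η * t), x ^ j ∂ρ) + |RI| :=
    (abs_sub _ _).trans (by rw [add_comm]; exact add_le_add hsum_abs le_rfl)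
  have hSnn : 0 ≤ ∑ j ∈ Finset.range (m + 1),
      |iteratedDeriv j h t| / (j.factorial : ℝ) * ∫ x in Set.Ioi (η * t), x ^ j ∂ρ :=
    Finset.sum_nonneg fun j _ => mul_nonneg (by positivity) (hJ j)
  -- bound on the remainder integral
  have hRbound : ENNReal.ofReal |RI|
      ≤ ENNReal.ofReal (|iteratedDeriv m h t| / (t ^ r * (m.factorial : ℝ))) *
        ∫⁻ x in Set.Icc (0 : ℝ) (η * t),
          DeltaBar r (iteratedDeriv m h) t (x / t) * ENNReal.ofReal (x ^ ((m : ℝ) + r)) ∂ρ := by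
    calc ENNReal.ofReal |RI| = ‖RI‖ₑ := (Real.enorm_eq_ofReal_abs RI).symm
      _ ≤ ∫⁻ x in Set.Icc (0:ℝ) (η * t),
            ‖h (t - x) - ∑ j ∈ Finset.range (m + 1),
              (-1:ℝ) ^ j / (j.factorial : ℝ) * iteratedDeriv j h t * x ^ j‖ₑ ∂ρ :=
          enorm_integral_le_lintegral_enorm _
      _ ≤ ∫⁻ x in Set.Icc (0:ℝ) (η * t),
            ENNReal.ofReal (|iteratedDeriv m h t| / (t ^ r * (m.factorial : ℝ))) *
              (DeltaBar r (iteratedDeriv m h) t (x / t) *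
                ENNReal.ofReal (x ^ ((m : ℝ) + r))) ∂ρ := by
          refine lintegral_mono_ae ?_
          filter_upwards [ae_restrict_mem measurableSet_Icc] with x hx
          rw [Real.enorm_eq_ofReal_abs]
          exact pointwise_bound m hm r hr0 η hη0 hη1 h hdiff hne t ht x hx
      _ = ENNReal.ofReal (|iteratedDeriv m h t| / (t ^ r * (m.factorial : ℝ))) *
            ∫⁻ x in Set.Icc (0 : ℝ) (η * t),
              DeltaBar r (iteratedDeriv m h) t (x / t) *
                ENNReal.ofReal (x ^ ((m : ℝ) + r)) ∂ρ :=
          lintegral_const_mul' _ _ ENNReal.ofReal_ne_top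
  calc ENNReal.ofReal |RI - ∑ j ∈ Finset.range (m + 1),
        (-1:ℝ) ^ j / (j.factorial : ℝ) * (∫ x in Set.Ioi (η * t), x ^ j ∂ρ) *
          iteratedDeriv j h t|
      ≤ ENNReal.ofReal ((∑ j ∈ Finset.range (m + 1),
          |iteratedDeriv j h t| / (j.factorial : ℝ) * ∫ x in Set.Ioi (η * t), x ^ j ∂ρ) + |RI|) :=
        ENNReal.ofReal_le_ofReal htri
    _ = ENNReal.ofReal (∑ j ∈ Finset.range (m + 1),
          |iteratedDeriv j h t| / (j.factorial : ℝ) * ∫ x in Set.Ioi (η * t), x ^ j ∂ρ)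
          + ENNReal.ofReal |RI| := ENNReal.ofReal_add hSnn (abs_nonneg _)
    _ ≤ _ := add_le_add le_rfl hRbound
end
end

section
/- Let ρ ∈ (0,1), let (c_i)_{i≥1} be a sequence of nonnegative real numbers with ∑_{i≥1} c_i^ρ ≤ 1, and let (X_i)_{i≥1} be i.i.d. nonnegative random variables. Then for every real s ≥ 1: E[(∑_{i≥1} c_i X_i)^s] ≤ (∑_{i≥1} c_i^{s(1−ρ)})·E[X₁^s]. -/
open MeasureTheory ProbabilityTheory Filter Set
open scoped ENNReal

noncomputable section

private lemma jensen_finset (F : Finset ℕ) (w y : ℕ → ℝ≥0∞)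
    (hw : ∑ i ∈ F, w i ≤ 1) {p : ℝ} (hp : 1 ≤ p) :
    (∑ i ∈ F, w i * y i) ^ p ≤ ∑ i ∈ F, w i * y i ^ p := by
  have hp0 : (0:ℝ) ≤ p := le_trans zero_le_one hp
  set W := ∑ i ∈ F, w i with hW
  rcases eq_or_ne W 0 with h0 | h0
  · have hz : ∀ i ∈ F, w i = 0 := by
      intro i hi
      exact Finset.sum_eq_zero_iff.mp (hW ▸ h0) i hi
    have : ∑ i ∈ F, w i * y i = 0 := Finset.sum_eq_zero fun i hi => by rw [hz i hi, zero_mul]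
    rw [this, ENNReal.zero_rpow_of_pos (lt_of_lt_of_le zero_lt_one hp)]
    exact zero_le
  · have hWtop : W ≠ ∞ := (lt_of_le_of_lt hw ENNReal.one_lt_top).ne
    have hcancel : ∀ z : ℕ → ℝ≥0∞, W * ∑ i ∈ F, (w i / W) * z i = ∑ i ∈ F, w i * z i := by
      intro z
      rw [Finset.mul_sum]
      refine Finset.sum_congr rfl fun i _ => ?_
      rw [← mul_assoc, mul_comm W (w i / W), ENNReal.div_mul_cancel h0 hWtop]
    have hsum : ∑ i ∈ F, w i / W = 1 := by
      simp_rw [div_eq_mul_inv]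
      rw [← Finset.sum_mul, ← hW, ← div_eq_mul_inv, ENNReal.div_self h0 hWtop]
    have h := ENNReal.rpow_arith_mean_le_arith_mean_rpow F (fun i => w i / W) y hsum hp
    calc (∑ i ∈ F, w i * y i) ^ p
        = (W * ∑ i ∈ F, (w i / W) * y i) ^ p := by rw [hcancel]
      _ = W ^ p * (∑ i ∈ F, (w i / W) * y i) ^ p := ENNReal.mul_rpow_of_nonneg _ _ hp0
      _ ≤ W ^ p * ∑ i ∈ F, (w i / W) * y i ^ p := by exact mul_le_mul_right h _
      _ = W ^ (p - 1) * (W * ∑ i ∈ F, (w i / W) * y i ^ p) := by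
          have hWp : W ^ p = W ^ (p - 1) * W := by
            have h2 := ENNReal.rpow_add_of_nonneg (x := W) (p - 1) 1 (by linarith) zero_le_one
            rw [ENNReal.rpow_one, sub_add_cancel] at h2
            exact h2
          rw [hWp, mul_assoc]
      _ = W ^ (p - 1) * ∑ i ∈ F, w i * y i ^ p := by rw [hcancel]
      _ ≤ 1 * ∑ i ∈ F, w i * y i ^ p := by
          gcongr
          exact ENNReal.rpow_le_one hw (by linarith)
      _ = ∑ i ∈ F, w i * y i ^ p := one_mul _

private lemma jensen_tsum (w y : ℕ → ℝ≥0∞) (hw : ∑' i, w i ≤ 1) {p : ℝ} (hp : 1 ≤ p) :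
    (∑' i, w i * y i) ^ p ≤ ∑' i, w i * y i ^ p := by
  have hlim : Tendsto (fun n => (∑ i ∈ Finset.range n, w i * y i) ^ p) atTop
      (nhds ((∑' i, w i * y i) ^ p)) :=
    (ENNReal.tendsto_nat_tsum fun i => w i * y i).ennrpow_const p
  refine le_of_tendsto' hlim fun n => ?_
  refine le_trans (jensen_finset _ w y (le_trans (ENNReal.sum_le_tsum _) hw) hp) ?_
  exact ENNReal.sum_le_tsum _

/-- Let `ρ ∈ (0,1)`, let `(c_i)` be nonnegative reals with
`∑_i c_i^ρ ≤ 1`, and let `(X_i)` be i.i.d. nonnegative random variables.  Then for every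
`s ≥ 1`, `E[(∑_i c_i X_i)^s] ≤ (∑_i c_i^{s(1-ρ)}) E[X₁^s]`, the inequality being
understood in `[0,∞]`. -/
theorem weighted_sum_moment_bound
    {Ω : Type*} [MeasurableSpace Ω] (P : Measure Ω) [IsProbabilityMeasure P]
    (ρ : ℝ) (hρ0 : 0 < ρ) (hρ1 : ρ < 1)
    (c : ℕ → ℝ) (hc : ∀ i, 0 ≤ c i)
    (hcρ : ∑' i : ℕ, ENNReal.ofReal (c i) ^ ρ ≤ 1)
    (X : ℕ → Ω → ℝ) (hXmeas : ∀ i, Measurable (X i)) (hXpos : ∀ i ω, 0 ≤ X i ω)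
    (hXindep : iIndepFun X P)
    (μ : Measure ℝ) (hXlaw : ∀ i, Measure.map (X i) P = μ)
    (s : ℝ) (hs : 1 ≤ s) :
    ∫⁻ ω, (∑' i : ℕ, ENNReal.ofReal (c i * X i ω)) ^ s ∂P ≤
      (∑' i : ℕ, ENNReal.ofReal (c i) ^ (s * (1 - ρ))) *
        ∫⁻ ω, ENNReal.ofReal (X 0 ω) ^ s ∂P := by
  set a : ℕ → ℝ≥0∞ := fun i => ENNReal.ofReal (c i) with ha
  have hs0 : (0:ℝ) ≤ s := le_trans zero_le_one hs
  have ha1 : ∀ i, a i ≤ 1 := by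
    intro i
    have h1 : a i ^ ρ ≤ 1 := le_trans (ENNReal.le_tsum i) hcρ
    have := ENNReal.rpow_le_rpow h1 (le_of_lt (one_div_pos.mpr hρ0))
    rwa [← ENNReal.rpow_mul, mul_one_div_cancel hρ0.ne', ENNReal.rpow_one,
      ENNReal.one_rpow] at this
  -- pointwise bound
  have hpt : ∀ ω, (∑' i : ℕ, ENNReal.ofReal (c i * X i ω)) ^ s ≤
      ∑' i, a i ^ (s * (1 - ρ)) * ENNReal.ofReal (X i ω) ^ s := by
    intro ω
    have hrw : ∀ i, ENNReal.ofReal (c i * X i ω)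
        = a i ^ ρ * (a i ^ (1 - ρ) * ENNReal.ofReal (X i ω)) := by
      intro i
      rw [ENNReal.ofReal_mul (hc i), ← mul_assoc,
        ← ENNReal.rpow_add_of_nonneg ρ (1 - ρ) hρ0.le (by linarith),
        add_sub_cancel, ENNReal.rpow_one]
    calc (∑' i : ℕ, ENNReal.ofReal (c i * X i ω)) ^ s
        = (∑' i, a i ^ ρ * (a i ^ (1 - ρ) * ENNReal.ofReal (X i ω))) ^ s := by
          simp_rw [hrw]
      _ ≤ ∑' i, a i ^ ρ * (a i ^ (1 - ρ) * ENNReal.ofReal (X i ω)) ^ s :=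
          jensen_tsum _ _ hcρ hs
      _ ≤ ∑' i, a i ^ (s * (1 - ρ)) * ENNReal.ofReal (X i ω) ^ s := by
          refine ENNReal.tsum_le_tsum fun i => ?_
          rw [ENNReal.mul_rpow_of_nonneg _ _ hs0, ← ENNReal.rpow_mul, ← mul_assoc]
          gcongr
          calc a i ^ ρ * a i ^ ((1 - ρ) * s)
              = a i ^ (ρ + (1 - ρ) * s) := by
                rw [ENNReal.rpow_add_of_nonneg ρ ((1-ρ)*s) hρ0.le
                  (mul_nonneg (by linarith) hs0)]
            _ ≤ a i ^ (s * (1 - ρ)) := by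
                apply ENNReal.rpow_le_rpow_of_exponent_ge (ha1 i)
                nlinarith
  -- integrate
  have hmeasY : ∀ i, Measurable fun ω => a i ^ (s * (1 - ρ)) * ENNReal.ofReal (X i ω) ^ s := by
    intro i
    exact (((hXmeas i).ennreal_ofReal.pow_const _)).const_mul _
  have hlaw : ∀ i, ∫⁻ ω, ENNReal.ofReal (X i ω) ^ s ∂P
      = ∫⁻ ω, ENNReal.ofReal (X 0 ω) ^ s ∂P := by
    intro i
    have hg : Measurable fun x : ℝ => ENNReal.ofReal x ^ s :=
      measurable_id.ennreal_ofReal.pow_const _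
    rw [← MeasureTheory.lintegral_map hg (hXmeas i), hXlaw i, ← hXlaw 0,
      MeasureTheory.lintegral_map hg (hXmeas 0)]
  calc ∫⁻ ω, (∑' i : ℕ, ENNReal.ofReal (c i * X i ω)) ^ s ∂P
      ≤ ∫⁻ ω, ∑' i, a i ^ (s * (1 - ρ)) * ENNReal.ofReal (X i ω) ^ s ∂P :=
        lintegral_mono hpt
    _ = ∑' i, ∫⁻ ω, a i ^ (s * (1 - ρ)) * ENNReal.ofReal (X i ω) ^ s ∂P :=
        lintegral_tsum fun i => (hmeasY i).aemeasurable
    _ = ∑' i, a i ^ (s * (1 - ρ)) * ∫⁻ ω, ENNReal.ofReal (X i ω) ^ s ∂P := by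
        refine tsum_congr fun i => ?_
        rw [lintegral_const_mul _ ((hXmeas i).ennreal_ofReal.pow_const _)]
    _ = ∑' i, a i ^ (s * (1 - ρ)) * ∫⁻ ω, ENNReal.ofReal (X 0 ω) ^ s ∂P := by
        refine tsum_congr fun i => ?_
        rw [hlaw i]
    _ = (∑' i : ℕ, ENNReal.ofReal (c i) ^ (s * (1 - ρ))) *
        ∫⁻ ω, ENNReal.ofReal (X 0 ω) ^ s ∂P := ENNReal.tsum_mul_right
end
end
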